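/- arXiv:2509.26445 — 4 statements merged into one kernel-verified Lean document; each statement's English description precedes it below -/
import Mathlib

section
/- The polynomial μ(z) = Σ_{k ≥ 0} m_k z^k, viewed as a polynomial with real coefficients, has only real roots; consequently its coefficient sequence is log-concave, i.e., m_k² ≥ m_{k−1} · m_{k+1} for all k ≥ 1, and unimodal. (By the main theorem of the paper, μ(z) is the Ehrhart h*-polynomial of the flow polytope F₁(G(H)), so this h*-polynomial is real-rooted, log-concave, and unimodal.) -/
open Finset Filter Pointwise

/-- Neighbors in the right shore `T` of a left vertex `i`. -/
def Nbr (E : Finset (ℕ × ℕ)) (i : ℕ) : Finset ℕ :=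
  (E.filter (fun p => p.1 = i)).image Prod.snd

/-- Neighbors in the left shore `S` of a right vertex `j`. -/
def Nbr' (E : Finset (ℕ × ℕ)) (j : ℕ) : Finset ℕ :=
  (E.filter (fun p => p.2 = j)).image Prod.fst

/-- Edges of the almost-degree-whiskered graph `W(H)`:
`Sum.inl (i,j)` is the edge `{i,j}` of `H`;
`Sum.inr (Sum.inl (i,j))` is the pendant edge `{i, w_{i,j}}`;
`Sum.inr (Sum.inr (j,i))` is the pendant edge `{j, w'_{j,i}}`. -/
abbrev WEdge : Type := (ℕ × ℕ) ⊕ ((ℕ × ℕ) ⊕ (ℕ × ℕ))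

def IsWEdge (E : Finset (ℕ × ℕ)) : WEdge → Prop
  | Sum.inl p => p ∈ E
  | Sum.inr (Sum.inl p) => p ∈ E ∧ ∃ j' ∈ Nbr E p.1, j' < p.2
  | Sum.inr (Sum.inr q) => (q.2, q.1) ∈ E ∧ ∃ i' ∈ Nbr' E q.1, q.2 < i'

/-- The `H`-vertex of the left shore covered by an edge of `W(H)`, if any. -/
def leftV : WEdge → Option ℕ
  | Sum.inl p => some p.1
  | Sum.inr (Sum.inl p) => some p.1
  | Sum.inr (Sum.inr _) => none

/-- The `H`-vertex of the right shore covered by an edge of `W(H)`, if any. -/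
def rightV : WEdge → Option ℕ
  | Sum.inl p => some p.2
  | Sum.inr (Sum.inl _) => none
  | Sum.inr (Sum.inr q) => some q.1

/-- A matching of `W(H)`: a set of pairwise disjoint edges of `W(H)`.
(Leaf vertices are covered by at most one edge label automatically.) -/
def IsMatching (E : Finset (ℕ × ℕ)) (M : Set WEdge) : Prop :=
  (∀ e ∈ M, IsWEdge E e) ∧
  ∀ e ∈ M, ∀ e' ∈ M, e ≠ e' →
    (leftV e = none ∨ leftV e ≠ leftV e') ∧
    (rightV e = none ∨ rightV e ≠ rightV e')

/-- `mCount E k` is `m_k`, the number of `k`-matchings of `W(H)`. -/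
noncomputable def mCount (E : Finset (ℕ × ℕ)) (k : ℕ) : ℕ :=
  {M : Set WEdge | IsMatching E M ∧ M.ncard = k}.ncard

/-- The bipartite graph `H` on vertex set `ℕ ⊕ ℕ`. -/
def bip (E : Finset (ℕ × ℕ)) : SimpleGraph (ℕ ⊕ ℕ) where
  Adj x y := (∃ i j, (i, j) ∈ E ∧ x = Sum.inl i ∧ y = Sum.inr j) ∨
             (∃ i j, (i, j) ∈ E ∧ x = Sum.inr j ∧ y = Sum.inl i)
  symm := by
    refine ⟨?_⟩
    rintro x y (⟨i, j, h, rfl, rfl⟩ | ⟨i, j, h, rfl, rfl⟩)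
    · exact Or.inr ⟨i, j, h, rfl, rfl⟩
    · exact Or.inl ⟨i, j, h, rfl, rfl⟩
  loopless := by
    refine ⟨?_⟩
    rintro x (⟨i, j, _, h1, h2⟩ | ⟨i, j, _, h1, h2⟩) <;> rw [h1] at h2 <;>
      cases h2

/-- `H` is connected (as a graph on the vertex set `S ⊎ T`). -/
def HConnected (n m : ℕ) (E : Finset (ℕ × ℕ)) : Prop :=
  ((bip E).induce ((Sum.inl '' (Set.Icc 1 n)) ∪ (Sum.inr '' (Set.Icc 1 m)))).Connected


/-- The unsigned matching polynomial `μ(z) = Σ_k m_k z^k` of `W(H)`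
(the sum is finite: `m_k = 0` for `k > 3|E|`). -/
noncomputable def matchPoly (E : Finset (ℕ × ℕ)) : Polynomial ℝ :=
  ∑ k ∈ Finset.range (3 * E.card + 1),
    Polynomial.C ((mCount E k : ℝ)) * Polynomial.X ^ k

/-!
The real-rootedness is the Heilmann–Lieb theorem, which holds for any graph whose edges have at
most two endpoints; `W(H)` is such a graph once its leaves are dropped. For `Im z > 0`, deleting a
vertex `v` gives `z μ(G - v) / μ(G) = z / (1 + ∑_{u ~ v} z μ(G - v - u) / μ(G - v))`, and by
induction on `G` every ratio `z μ(G - v) / μ(G)` has argument in `(0, arg z]`; in particular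
`μ(G)(z) ≠ 0`. The roots are then negative, since the coefficients are nonnegative with constant
term `1`, so `μ` is a positive multiple of a product of factors `X + a` with `a > 0`. Multiplying
by such a factor preserves log-concavity of a coefficient sequence without internal zeros, and for
such a sequence a weak descent propagates upwards, which gives unimodality.
-/

open Polynomial

structure LogConcaveUpTo (g : ℕ → ℝ) (d : ℕ) : Prop where
  pos : ∀ k ≤ d, 0 < g k
  eq_zero : ∀ k, d < k → g k = 0
  mul_le_sq : ∀ k, g k * g (k + 2) ≤ g (k + 1) ^ 2

namespace LogConcaveUpTo

variable {g : ℕ → ℝ} {d : ℕ}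

lemma nonneg (h : LogConcaveUpTo g d) (k : ℕ) : 0 ≤ g k := by
  rcases le_or_gt k d with hk | hk
  · exact (h.pos k hk).le
  · exact (h.eq_zero k hk).ge

lemma mul_add_three_le (h : LogConcaveUpTo g d) (k : ℕ) :
    g k * g (k + 3) ≤ g (k + 1) * g (k + 2) := by
  rcases le_or_gt (k + 3) d with hd | hd
  · have := mul_le_mul (h.mul_le_sq k) (h.mul_le_sq (k + 1))
      (mul_nonneg (h.nonneg _) (h.nonneg _)) (sq_nonneg _)
    refine le_of_mul_le_mul_right ?_ (mul_pos (h.pos (k + 1) (by omega)) (h.pos (k + 2) (by omega)))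
    nlinarith
  · rw [h.eq_zero (k + 3) hd, mul_zero]
    exact mul_nonneg (h.nonneg _) (h.nonneg _)

lemma succ_succ_le_of_succ_le (h : LogConcaveUpTo g d) {k : ℕ} (hk : g (k + 1) ≤ g k) :
    g (k + 2) ≤ g (k + 1) := by
  rcases le_or_gt k d with hkd | hkd
  · refine le_of_mul_le_mul_left ?_ (h.pos k hkd)
    nlinarith [h.mul_le_sq k, h.nonneg (k + 1)]
  · rw [h.eq_zero _ (by omega), h.eq_zero _ (by omega)]

lemma exists_unimodal (h : LogConcaveUpTo g d) :
    ∃ p, MonotoneOn g (Set.Iic p) ∧ AntitoneOn g (Set.Ici p) := by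
  classical
  have hdesc : ∃ k, g (k + 1) ≤ g k :=
    ⟨d, by rw [h.eq_zero (d + 1) d.lt_succ_self]; exact h.nonneg d⟩
  refine ⟨Nat.find hdesc, ?_, ?_⟩
  · refine monotoneOn_of_le_succ Set.ordConnected_Iic fun k _ _ hk => ?_
    rw [Order.succ_eq_add_one] at hk ⊢
    exact (not_le.mp (Nat.find_min hdesc (Nat.lt_of_succ_le hk))).le
  · refine antitoneOn_nat_Ici_of_succ_le fun k hk => ?_
    induction k, hk using Nat.le_induction with
    | base => exact Nat.find_spec hdesc
    | succ k _ ih => exact h.succ_succ_le_of_succ_le ih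

lemma X_add_C_mul {q : ℝ[X]} (hq : LogConcaveUpTo q.coeff d) {a : ℝ} (ha : 0 < a) :
    LogConcaveUpTo ((X + C a) * q).coeff (d + 1) := by
  have hc0 : ((X + C a) * q).coeff 0 = a * q.coeff 0 := by simp [add_mul]
  have hc (k : ℕ) : ((X + C a) * q).coeff (k + 1) = q.coeff k + a * q.coeff (k + 1) := by
    simp [add_mul, coeff_X_mul, coeff_C_mul]
  refine ⟨fun k hk => ?_, fun k hk => ?_, fun k => ?_⟩
  · rcases k with _ | k
    · rw [hc0]
      exact mul_pos ha (hq.pos 0 d.zero_le)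
    · rw [hc]
      exact add_pos_of_pos_of_nonneg (hq.pos k (by omega)) (mul_nonneg ha.le (hq.nonneg _))
  · obtain ⟨k, rfl⟩ : ∃ j, k = j + 1 := ⟨k - 1, by omega⟩
    rw [hc, hq.eq_zero k (by omega), hq.eq_zero (k + 1) (by omega), mul_zero, add_zero]
  · rcases k with _ | k
    · rw [hc0, hc, hc]
      nlinarith [mul_le_mul_of_nonneg_left (hq.mul_le_sq 0) (sq_nonneg a),
        mul_nonneg (mul_nonneg ha.le (hq.nonneg 0)) (hq.nonneg 1), sq_nonneg (q.coeff 0)]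
    · rw [hc, hc, hc]
      nlinarith [hq.mul_le_sq k, mul_le_mul_of_nonneg_left (hq.mul_add_three_le k) ha.le,
        mul_le_mul_of_nonneg_left (hq.mul_le_sq (k + 1)) (sq_nonneg a)]

end LogConcaveUpTo

lemma logConcaveUpTo_coeff_C {c : ℝ} (hc : 0 < c) : LogConcaveUpTo (C c).coeff 0 where
  pos k hk := by rw [Nat.le_zero.mp hk, coeff_C_zero]; exact hc
  eq_zero k hk := coeff_C_of_ne_zero hk.ne'
  mul_le_sq k := by simp [coeff_C]

lemma eval_re_eq_zero_of_aeval_eq_zero {p : ℝ[X]} {z : ℂ} (him : z.im = 0)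
    (hz : aeval z p = 0) : p.eval z.re = 0 := by
  have : (z.re : ℂ) = z := Complex.ext rfl (by simp [him])
  rwa [← this, show (z.re : ℂ) = algebraMap ℝ ℂ z.re from rfl,
    aeval_algebraMap_apply_eq_algebraMap_eval, map_eq_zero] at hz

theorem logConcaveUpTo_coeff_of_roots_neg {p : ℝ[X]} (hlc : 0 < p.leadingCoeff)
    (hroots : ∀ z : ℂ, aeval z p = 0 → z.im = 0 ∧ z.re < 0) :
    LogConcaveUpTo p.coeff p.natDegree := by
  induction hn : p.natDegree generalizing p with
  | zero =>
    rw [leadingCoeff, hn] at hlc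
    rw [eq_C_of_natDegree_eq_zero hn]
    exact logConcaveUpTo_coeff_C hlc
  | succ n ih =>
    obtain ⟨z, hz⟩ : ∃ z : ℂ, aeval z p = 0 := by
      obtain ⟨z, hz⟩ := Complex.exists_root (f := p.map (algebraMap ℝ ℂ))
        (by rw [degree_map]; exact natDegree_pos_iff_degree_pos.mp (by omega))
      exact ⟨z, by rwa [aeval_def, eval₂_eq_eval_map]⟩
    obtain ⟨him, hre⟩ := hroots z hz
    set q := p /ₘ (X - C z.re)
    have hpq : p = (X + C (-z.re)) * q := by
      rw [C_neg, ← sub_eq_add_neg, mul_divByMonic_eq_iff_isRoot.mpr]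
      exact eval_re_eq_zero_of_aeval_eq_zero him hz
    have hq0 : q ≠ 0 := by
      rintro hq
      rw [hq, mul_zero] at hpq
      simp [hpq] at hn
    have hqdeg : q.natDegree = n := by
      rw [hpq, natDegree_mul (X_add_C_ne_zero _) hq0, natDegree_X_add_C] at hn
      omega
    have hqlc : q.leadingCoeff = p.leadingCoeff := by
      rw [hpq, leadingCoeff_mul, leadingCoeff_X_add_C, one_mul]
    have hq := ih (hqlc ▸ hlc) (fun w hw => hroots w (by rw [hpq, map_mul, hw, mul_zero])) hqdeg
    rw [hpq]
    exact hq.X_add_C_mul (neg_pos.mpr hre)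

/-- For `0 < z.im`: `w` lies in the open upper half-plane, weakly clockwise of `z`, i.e.
`0 < arg w ≤ arg z`. -/
def InSector (z w : ℂ) : Prop := 0 < w.im ∧ (w * (starRingEnd ℂ) z).im ≤ 0

section InSector

variable {z w : ℂ}

lemma inSector_self (hz : 0 < z.im) : InSector z z :=
  ⟨hz, by rw [Complex.mul_conj]; simp⟩

lemma inSector_sum {ι : Type*} {s : Finset ι} (hs : s.Nonempty) {f : ι → ℂ}
    (hf : ∀ i ∈ s, InSector z (f i)) : InSector z (∑ i ∈ s, f i) := by
  refine ⟨?_, ?_⟩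
  · rw [Complex.im_sum]
    exact sum_pos (fun i hi => (hf i hi).1) hs
  · rw [sum_mul, Complex.im_sum]
    exact sum_nonpos (fun i hi => (hf i hi).2)

lemma InSector.one_add_ne_zero (hw : InSector z w) : 1 + w ≠ 0 := fun h =>
  (hw.1.trans_eq (by simpa using congrArg Complex.im h)).false

lemma InSector.div_one_add (hz : 0 < z.im) (hw : InSector z w) : InSector z (z / (1 + w)) := by
  have hN : 0 < Complex.normSq (1 + w) := Complex.normSq_pos.mpr hw.one_add_ne_zero
  refine ⟨?_, ?_⟩
  · have : (z / (1 + w)).im = (z.im - (w * (starRingEnd ℂ) z).im) / Complex.normSq (1 + w) := by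
      simp only [Complex.div_im, Complex.mul_im, Complex.conj_re, Complex.conj_im,
        Complex.add_re, Complex.add_im, Complex.one_re, Complex.one_im]
      ring
    rw [this]
    exact div_pos (by linarith [hw.2]) hN
  · have : (z / (1 + w) * (starRingEnd ℂ) z).im =
        -(Complex.normSq z * w.im) / Complex.normSq (1 + w) := by
      rw [div_mul_eq_mul_div, Complex.mul_conj, Complex.div_im]
      simp only [Complex.ofReal_im, Complex.ofReal_re, Complex.add_im, Complex.one_im, zero_add,
        zero_mul, zero_div, zero_sub]
      ring
    rw [this]
    exact div_nonpos_of_nonpos_of_nonneg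
      (neg_nonpos.mpr (mul_nonneg (Complex.normSq_nonneg z) hw.1.le)) hN.le

end InSector

section Matchings

variable {α β : Type*} (V : α → Finset β)

open Classical in
noncomputable def matchings (s : Finset α) : Finset (Finset α) :=
  s.powerset.filter fun M => (M : Set α).Pairwise fun e f => Disjoint (V e) (V f)

noncomputable def matchingPoly (s : Finset α) : ℝ[X] :=
  ∑ M ∈ matchings V s, X ^ M.card

variable {V}

lemma mem_matchings {s M : Finset α} :
    M ∈ matchings V s ↔ M ⊆ s ∧ (M : Set α).Pairwise fun e f => Disjoint (V e) (V f) := by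
  simp [matchings]

lemma matchings_empty : matchings V (∅ : Finset α) = {∅} := by
  ext M
  simp +contextual [mem_matchings]

lemma empty_mem_matchings (s : Finset α) : ∅ ∈ matchings V s :=
  mem_matchings.mpr ⟨empty_subset s, by simp⟩

lemma coeff_matchingPoly (s : Finset α) (k : ℕ) :
    (matchingPoly V s).coeff k = #{M ∈ matchings V s | M.card = k} := by
  simp [matchingPoly, finsetSum_coeff, coeff_X_pow, eq_comm]

lemma one_le_eval_matchingPoly (s : Finset α) {t : ℝ} (ht : 0 ≤ t) :
    1 ≤ (matchingPoly V s).eval t := by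
  simp only [matchingPoly, eval_finsetSum, eval_pow, eval_X]
  calc (1 : ℝ) = t ^ (∅ : Finset α).card := by simp
    _ ≤ _ := single_le_sum (f := fun M : Finset α => t ^ M.card) (fun M _ => pow_nonneg ht _)
      (empty_mem_matchings (V := V) s)

variable [DecidableEq β]

lemma matchings_filter_not_exists (s : Finset α) (v : β) :
    (matchings V s).filter (fun M => ¬∃ e ∈ M, v ∈ V e) = matchings V (s.filter (v ∉ V ·)) := by
  ext M
  simp only [mem_filter, mem_matchings, subset_iff]
  grind

lemma insert_mem_matchings_iff [DecidableEq α] {s M : Finset α} {e : α} (hes : e ∈ s)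
    (heM : e ∉ M) :
    insert e M ∈ matchings V s ↔ M ∈ matchings V (s.filter fun f => Disjoint (V e) (V f)) := by
  rw [mem_matchings, mem_matchings, insert_subset_iff, coe_insert, Set.pairwise_insert]
  constructor
  · rintro ⟨⟨-, hMs⟩, hM, he⟩
    exact ⟨fun f hf => mem_filter.mpr ⟨hMs hf, (he f hf (ne_of_mem_of_not_mem hf heM).symm).1⟩, hM⟩
  · rintro ⟨hMs, hM⟩
    have h := fun f (hf : f ∈ M) => mem_filter.mp (hMs hf)
    exact ⟨⟨hes, fun f hf => (h f hf).1⟩, hM, fun f hf _ => ⟨(h f hf).2, (h f hf).2.symm⟩⟩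

lemma notMem_of_mem_matchings_filter_disjoint {s M : Finset α} {e e' : α} {v : β}
    (hv : v ∈ V e) (hv' : v ∈ V e')
    (hM : M ∈ matchings V (s.filter fun f => Disjoint (V e) (V f))) : e' ∉ M := fun he' =>
  disjoint_left.mp (mem_filter.mp ((mem_matchings.mp hM).1 he')).2 hv hv'

/-- A matching meeting `v` does so in exactly one edge `e`, and removing `e` leaves a matching
of the edges disjoint from `e`. -/
lemma sum_matchings_filter_exists_mem [DecidableEq α] {R : Type*} [AddCommMonoid R]
    (s : Finset α) (v : β) (g : Finset α → R) :
    ∑ M ∈ (matchings V s).filter (fun M => ∃ e ∈ M, v ∈ V e), g M =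
      ∑ e ∈ s.filter (v ∈ V ·), ∑ M ∈ matchings V (s.filter fun f => Disjoint (V e) (V f)),
        g (insert e M) := by
  rw [sum_sigma']
  symm
  refine sum_bij (fun x _ => insert x.1 x.2) ?_ ?_ ?_ fun _ _ => rfl
  · rintro ⟨e, M⟩ hx
    obtain ⟨he, hM⟩ := mem_sigma.mp hx
    obtain ⟨hes, hv⟩ := mem_filter.mp he
    exact mem_filter.mpr ⟨(insert_mem_matchings_iff hes
      (notMem_of_mem_matchings_filter_disjoint hv hv hM)).mpr hM, e, mem_insert_self e M, hv⟩
  · rintro ⟨e, A⟩ hx ⟨e', B⟩ hy hAB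
    obtain ⟨he, hA⟩ := mem_sigma.mp hx
    obtain ⟨he', hB⟩ := mem_sigma.mp hy
    have hv := (mem_filter.mp he).2
    have hv' := (mem_filter.mp he').2
    obtain rfl : e = e' := (mem_insert.mp (hAB ▸ mem_insert_self e A)).resolve_right
      (notMem_of_mem_matchings_filter_disjoint hv' hv hB)
    have := congrArg (erase · e) hAB
    simp only [erase_insert (notMem_of_mem_matchings_filter_disjoint hv hv hA),
      erase_insert (notMem_of_mem_matchings_filter_disjoint hv hv hB)] at this
    rw [this]
  · intro M hM
    obtain ⟨hM, e, heM, hv⟩ := mem_filter.mp hM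
    have hes := (mem_matchings.mp hM).1 heM
    refine ⟨⟨e, M.erase e⟩, mem_sigma.mpr ⟨mem_filter.mpr ⟨hes, hv⟩, ?_⟩, insert_erase heM⟩
    rwa [← insert_mem_matchings_iff hes (notMem_erase e M), insert_erase heM]

theorem matchingPoly_eq_add_sum [DecidableEq α] (s : Finset α) (v : β) :
    matchingPoly V s = matchingPoly V (s.filter (v ∉ V ·)) +
      ∑ e ∈ s.filter (v ∈ V ·), X * matchingPoly V (s.filter fun f => Disjoint (V e) (V f)) := by
  rw [matchingPoly, ← sum_filter_not_add_sum_filter _ fun M => ∃ e ∈ M, v ∈ V e,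
    matchings_filter_not_exists, sum_matchings_filter_exists_mem]
  simp only [matchingPoly, mul_sum]
  congr 1
  refine sum_congr rfl fun e he => sum_congr rfl fun M hM => ?_
  have hv := (mem_filter.mp he).2
  rw [card_insert_of_notMem (notMem_of_mem_matchings_filter_disjoint hv hv hM), pow_succ']

lemma exists_filter_disjoint_eq_filter_filter (s : Finset α) {e : α} {v : β} (hv : v ∈ V e)
    (hcard : (V e).card ≤ 2) :
    ∃ u, (s.filter fun f => Disjoint (V e) (V f)) = (s.filter (v ∉ V ·)).filter (u ∉ V ·) := by
  obtain ⟨u, hu⟩ : ∃ u, V e = {v, u} := by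
    have h1 : ((V e).erase v).card ≤ 1 := by rw [card_erase_of_mem hv]; omega
    rcases ((V e).erase v).eq_empty_or_nonempty with h | ⟨u, hu⟩
    · refine ⟨v, ?_⟩
      rw [← insert_erase hv, h]
      simp
    · rw [← insert_erase hv, eq_singleton_iff_unique_mem.mpr
        ⟨hu, fun w hw => card_le_one.mp h1 w hw u hu⟩]
      exact ⟨u, rfl⟩
  refine ⟨u, ?_⟩
  rw [filter_filter, hu]
  simp [disjoint_insert_left]

theorem aeval_matchingPoly_ne_zero_and_inSector [DecidableEq α] {s : Finset α}
    (hV : ∀ e ∈ s, (V e).Nonempty ∧ (V e).card ≤ 2) {z : ℂ} (hz : 0 < z.im) :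
    aeval z (matchingPoly V s) ≠ 0 ∧ ∀ v, InSector z
      (z * aeval z (matchingPoly V (s.filter (v ∉ V ·))) / aeval z (matchingPoly V s)) := by
  induction s using Finset.strongInduction with | H s ih => ?_
  have hvertex (v : β) (hv : ∃ e ∈ s, v ∈ V e) : aeval z (matchingPoly V s) ≠ 0 ∧ InSector z
      (z * aeval z (matchingPoly V (s.filter (v ∉ V ·))) / aeval z (matchingPoly V s)) := by
    obtain ⟨e₀, he₀, hv₀⟩ := hv
    set s₀ := s.filter (v ∉ V ·)
    obtain ⟨hne, hsec⟩ := ih s₀ (filter_ssubset.mpr ⟨e₀, he₀, not_not.mpr hv₀⟩)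
      fun e he => hV e (filter_subset _ s he)
    set W := ∑ e ∈ s.filter (v ∈ V ·),
      z * aeval z (matchingPoly V (s.filter fun f => Disjoint (V e) (V f))) /
        aeval z (matchingPoly V s₀)
    have hW : InSector z W := inSector_sum ⟨e₀, mem_filter.mpr ⟨he₀, hv₀⟩⟩ fun e he => by
      obtain ⟨hes, hv⟩ := mem_filter.mp he
      obtain ⟨u, hu⟩ := exists_filter_disjoint_eq_filter_filter s hv (hV e hes).2
      rw [hu]
      exact hsec u
    have hP : aeval z (matchingPoly V s) = aeval z (matchingPoly V s₀) * (1 + W) := by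
      rw [matchingPoly_eq_add_sum s v, map_add, map_sum, mul_add, mul_one, mul_sum]
      congr 1
      refine sum_congr rfl fun e _ => ?_
      rw [map_mul, aeval_X]
      field_simp
    rw [hP, mul_comm z, mul_div_mul_left _ _ hne]
    exact ⟨mul_ne_zero hne hW.one_add_ne_zero, hW.div_one_add hz⟩
  have hne : aeval z (matchingPoly V s) ≠ 0 := by
    rcases s.eq_empty_or_nonempty with rfl | ⟨e, he⟩
    · simp [matchingPoly, matchings_empty]
    · obtain ⟨v, hv⟩ := (hV e he).1
      exact (hvertex v ⟨e, he, hv⟩).1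
  refine ⟨hne, fun v => ?_⟩
  by_cases h : ∃ e ∈ s, v ∈ V e
  · exact (hvertex v h).2
  · push Not at h
    rw [filter_true_of_mem h, mul_div_assoc, div_self hne, mul_one]
    exact inSector_self hz

variable {s : Finset α}

theorem im_eq_zero_of_aeval_matchingPoly_eq_zero [DecidableEq α]
    (hV : ∀ e ∈ s, (V e).Nonempty ∧ (V e).card ≤ 2) {z : ℂ}
    (hz : aeval z (matchingPoly V s) = 0) : z.im = 0 := by
  rcases lt_trichotomy z.im 0 with h | h | h
  · refine absurd ?_ (aeval_matchingPoly_ne_zero_and_inSector hV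
      (z := starRingEnd ℂ z) (by simpa using h)).1
    rw [aeval_conj, hz, map_zero]
  · exact h
  · exact absurd hz (aeval_matchingPoly_ne_zero_and_inSector hV h).1

theorem logConcaveUpTo_coeff_matchingPoly [DecidableEq α]
    (hV : ∀ e ∈ s, (V e).Nonempty ∧ (V e).card ≤ 2) :
    LogConcaveUpTo (matchingPoly V s).coeff (matchingPoly V s).natDegree := by
  have hroots (z : ℂ) (hz : aeval z (matchingPoly V s) = 0) : z.im = 0 ∧ z.re < 0 := by
    have him := im_eq_zero_of_aeval_matchingPoly_eq_zero hV hz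
    refine ⟨him, not_le.mp fun hre => ?_⟩
    linarith [one_le_eval_matchingPoly (V := V) s hre, eval_re_eq_zero_of_aeval_eq_zero him hz]
  have hne : matchingPoly V s ≠ 0 := fun h => by
    linarith [one_le_eval_matchingPoly (V := V) s le_rfl, congrArg (eval 0) h,
      eval_zero (x := (0 : ℝ))]
  refine logConcaveUpTo_coeff_of_roots_neg
    (lt_of_le_of_ne ?_ (leadingCoeff_ne_zero.mpr hne).symm) hroots
  rw [leadingCoeff, coeff_matchingPoly]
  positivity

end Matchings

/-- Endpoints in `H` only: each leaf of `W(H)` lies on a single edge, so it never obstructs a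
matching. -/
def endpoints : WEdge → Finset (ℕ ⊕ ℕ)
  | Sum.inl p => {Sum.inl p.1, Sum.inr p.2}
  | Sum.inr (Sum.inl p) => {Sum.inl p.1}
  | Sum.inr (Sum.inr q) => {Sum.inr q.1}

lemma endpoints_nonempty (e : WEdge) : (endpoints e).Nonempty := by
  rcases e with p | p | q <;> simp [endpoints]

lemma card_endpoints_le (e : WEdge) : (endpoints e).card ≤ 2 := by
  rcases e with p | p | q <;> simp [endpoints]

lemma disjoint_endpoints_iff (e e' : WEdge) :
    Disjoint (endpoints e) (endpoints e') ↔
      (leftV e = none ∨ leftV e ≠ leftV e') ∧ (rightV e = none ∨ rightV e ≠ rightV e') := by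
  rcases e with p | p | q <;> rcases e' with p' | p' | q' <;>
    simp [endpoints, leftV, rightV, eq_comm]

open Classical in
noncomputable def wedges (E : Finset (ℕ × ℕ)) : Finset WEdge :=
  (E.image Sum.inl ∪ E.image (Sum.inr ∘ Sum.inl) ∪
    E.image fun p => Sum.inr (Sum.inr (p.2, p.1))).filter (IsWEdge E)

lemma mem_wedges {E : Finset (ℕ × ℕ)} {e : WEdge} : e ∈ wedges E ↔ IsWEdge E e := by
  rcases e with p | p | q <;> simp [wedges, IsWEdge, Prod.ext_iff]

lemma card_wedges_le (E : Finset (ℕ × ℕ)) : (wedges E).card ≤ 3 * E.card := by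
  classical
  unfold wedges
  refine (card_filter_le _ _).trans ((card_union_le _ _).trans ?_)
  have := card_union_le (E.image (Sum.inl : _ → WEdge)) (E.image (Sum.inr ∘ Sum.inl))
  have := card_image_le (s := E) (f := (Sum.inl : _ → WEdge))
  have := card_image_le (s := E) (f := (Sum.inr ∘ Sum.inl : _ → WEdge))
  have := card_image_le (s := E) (f := fun p => (Sum.inr (Sum.inr (p.2, p.1)) : WEdge))
  omega

lemma isMatching_coe_iff {E : Finset (ℕ × ℕ)} (M : Finset WEdge) :
    IsMatching E M ↔ M ∈ matchings endpoints (wedges E) := by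
  simp only [IsMatching, mem_matchings, ← disjoint_endpoints_iff, subset_iff, mem_wedges]
  rfl

lemma mCount_eq_card (E : Finset (ℕ × ℕ)) (k : ℕ) :
    mCount E k = #{M ∈ matchings endpoints (wedges E) | M.card = k} := by
  have : {M : Set WEdge | IsMatching E M ∧ M.ncard = k} =
      (↑) '' (↑{M ∈ matchings endpoints (wedges E) | M.card = k} : Set (Finset WEdge)) := by
    ext M
    simp only [Set.mem_ofPred_eq, Set.mem_image, mem_coe, mem_filter]
    constructor
    · rintro ⟨hM, rfl⟩
      obtain ⟨F, rfl⟩ := ((wedges E).finite_toSet.subset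
        fun e he => mem_wedges.mpr (hM.1 e he)).exists_finset_coe
      exact ⟨F, ⟨(isMatching_coe_iff F).mp hM, (Set.ncard_coe_finset F).symm⟩, rfl⟩
    · rintro ⟨F, ⟨hF, rfl⟩, rfl⟩
      exact ⟨(isMatching_coe_iff F).mpr hF, Set.ncard_coe_finset F⟩
  rw [mCount, this, Set.ncard_image_of_injective _ coe_injective, Set.ncard_coe_finset]

lemma mCount_eq_zero {E : Finset (ℕ × ℕ)} {k : ℕ} (hk : 3 * E.card < k) : mCount E k = 0 := by
  rw [mCount_eq_card, card_eq_zero, filter_eq_empty_iff]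
  intro M hM hMk
  have := card_le_card (mem_matchings.mp hM).1
  have := card_wedges_le E
  omega

lemma coeff_matchPoly (E : Finset (ℕ × ℕ)) (k : ℕ) : (matchPoly E).coeff k = mCount E k := by
  simp only [matchPoly, finsetSum_coeff, coeff_C_mul_X_pow, sum_ite_eq, mem_range]
  split_ifs with hk
  · rfl
  · rw [mCount_eq_zero (by omega), Nat.cast_zero]

lemma matchPoly_eq_matchingPoly (E : Finset (ℕ × ℕ)) :
    matchPoly E = matchingPoly endpoints (wedges E) :=
  ext fun k => by rw [coeff_matchPoly, coeff_matchingPoly, mCount_eq_card]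

theorem matching_poly_real_rooted_general (E : Finset (ℕ × ℕ)) :
    (∀ z : ℂ, Polynomial.aeval z (matchPoly E) = 0 → z.im = 0) ∧
    (∀ k : ℕ, 1 ≤ k → mCount E (k - 1) * mCount E (k + 1) ≤ mCount E k * mCount E k) ∧
    (∃ p : ℕ, (∀ a b : ℕ, a ≤ b → b ≤ p → mCount E a ≤ mCount E b) ∧
      (∀ a b : ℕ, p ≤ a → a ≤ b → mCount E b ≤ mCount E a)) := by
  have hV (e) (_ : e ∈ wedges E) : (endpoints e).Nonempty ∧ (endpoints e).card ≤ 2 :=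
    ⟨endpoints_nonempty e, card_endpoints_le e⟩
  have hlc := logConcaveUpTo_coeff_matchingPoly hV
  rw [← matchPoly_eq_matchingPoly, show (matchPoly E).coeff = _ from funext (coeff_matchPoly E)]
    at hlc
  obtain ⟨p, hmono, hanti⟩ := hlc.exists_unimodal
  refine ⟨fun z hz => im_eq_zero_of_aeval_matchingPoly_eq_zero hV
    (matchPoly_eq_matchingPoly E ▸ hz), fun k hk => ?_, p, fun a b hab hbp => ?_,
    fun a b hpa hab => ?_⟩
  · obtain ⟨j, rfl⟩ : ∃ j, k = j + 1 := ⟨k - 1, by omega⟩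
    have := hlc.mul_le_sq j
    rw [sq] at this
    exact_mod_cast this
  · have : (mCount E a : ℝ) ≤ mCount E b := hmono (hab.trans hbp) hbp hab
    exact_mod_cast this
  · have : (mCount E b : ℝ) ≤ mCount E a := hanti hpa (hpa.trans hab) hab
    exact_mod_cast this

/-- The matching polynomial of `W(H)` is real-rooted; hence its coefficient
sequence is log-concave and unimodal. -/
theorem matching_poly_real_rooted (n m : ℕ) (hn : 1 ≤ n) (hm : 1 ≤ m) (E : Finset (ℕ × ℕ))
    (hE : ∀ p ∈ E, 1 ≤ p.1 ∧ p.1 ≤ n ∧ 1 ≤ p.2 ∧ p.2 ≤ m)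
    (hdegS : ∀ i ∈ Finset.Icc 1 n, 2 ≤ (Nbr E i).card)
    (hdegT : ∀ j ∈ Finset.Icc 1 m, 2 ≤ (Nbr' E j).card)
    (hconn : HConnected n m E) :
    (∀ z : ℂ, Polynomial.aeval z (matchPoly E) = 0 → z.im = 0) ∧
    (∀ k : ℕ, 1 ≤ k → mCount E (k - 1) * mCount E (k + 1) ≤ mCount E k * mCount E k) ∧
    (∃ p : ℕ, (∀ a b : ℕ, a ≤ b → b ≤ p → mCount E a ≤ mCount E b) ∧
      (∀ a b : ℕ, p ≤ a → a ≤ b → mCount E b ≤ mCount E a)) :=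
  matching_poly_real_rooted_general E
end

section
/- The clique map φ is a bijection from the set of clique vectors for H onto the set of maximal cliques of routes of G(H) with respect to the canonical bipartite framing. In particular, for every clique vector v, the set of routes φ(v) is a maximal clique. -/
open Finset Filter Pointwise

/-- A route of `G(H)`: a triple `(a, (i,j), c)` with `a, c ∈ {1,2}`, `(i,j) ∈ E`,
representing the path `α_{a,i} β_{i,j} γ_{j,c}`. -/
abbrev Route : Type := ℕ × (ℕ × ℕ) × ℕ

def IsRoute (E : Finset (ℕ × ℕ)) (r : Route) : Prop :=
  (r.1 = 1 ∨ r.1 = 2) ∧ r.2.1 ∈ E ∧ (r.2.2 = 1 ∨ r.2.2 = 2)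

/-- Two routes are in conflict with respect to the canonical bipartite framing. -/
def Conflict (r r' : Route) : Prop :=
  (r.2.1 = r'.2.1 ∧
    ((r.1 = 1 ∧ r.2.2 = 2 ∧ r'.1 = 2 ∧ r'.2.2 = 1) ∨
     (r.1 = 2 ∧ r.2.2 = 1 ∧ r'.1 = 1 ∧ r'.2.2 = 2))) ∨
  (r.2.1.1 = r'.2.1.1 ∧ r.2.1.2 ≠ r'.2.1.2 ∧
    ((r.2.1.2 < r'.2.1.2 ∧ r'.1 = 1 ∧ r.1 = 2) ∨
     (r'.2.1.2 < r.2.1.2 ∧ r.1 = 1 ∧ r'.1 = 2))) ∨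
  (r.2.1.2 = r'.2.1.2 ∧ r.2.1.1 ≠ r'.2.1.1 ∧
    ((r.2.1.1 < r'.2.1.1 ∧ r.2.2 = 2 ∧ r'.2.2 = 1) ∨
     (r'.2.1.1 < r.2.1.1 ∧ r'.2.2 = 2 ∧ r.2.2 = 1)))

/-- A clique: a set of pairwise coherent routes. -/
def IsClique (E : Finset (ℕ × ℕ)) (C : Set Route) : Prop :=
  (∀ r ∈ C, IsRoute E r) ∧ ∀ r ∈ C, ∀ r' ∈ C, r ≠ r' → ¬ Conflict r r'

/-- A maximal clique of routes. -/
def IsMaxClique (E : Finset (ℕ × ℕ)) (C : Set Route) : Prop :=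
  IsClique E C ∧ ∀ C' : Set Route, IsClique E C' → C ⊆ C' → C' = C

/-- A clique vector `(f, g, s)` for the bipartite graph `H`; values outside the
domains are normalized (to `0`, resp. `false`). -/
structure CliqueVec (n m : ℕ) (E : Finset (ℕ × ℕ)) where
  f : ℕ → ℕ
  g : ℕ → ℕ
  s : ℕ × ℕ → Bool
  hf : ∀ i ∈ Finset.Icc 1 n, (i, f i) ∈ E
  hg : ∀ j ∈ Finset.Icc 1 m, (g j, j) ∈ E
  hs : ∀ p ∈ E, s p = true → f p.1 = p.2 ∧ g p.2 = p.1
  hf' : ∀ i ∉ Finset.Icc 1 n, f i = 0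
  hg' : ∀ j ∉ Finset.Icc 1 m, g j = 0
  hs' : ∀ p ∉ E, s p = false

/-- The clique map `φ`. -/
def phi {n m : ℕ} {E : Finset (ℕ × ℕ)} (v : CliqueVec n m E) : Set Route :=
  { r | ∃ a i j c : ℕ, r = (a, (i, j), c) ∧ (i, j) ∈ E ∧
    ((v.f i ≠ j ∧ v.g j ≠ i ∧
        a = (if v.f i < j then 2 else 1) ∧ c = (if v.g j < i then 2 else 1)) ∨
     (v.f i = j ∧ v.g j ≠ i ∧ (a = 1 ∨ a = 2) ∧ c = (if v.g j < i then 2 else 1)) ∨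
     (v.g j = i ∧ v.f i ≠ j ∧ a = (if v.f i < j then 2 else 1) ∧ (c = 1 ∨ c = 2)) ∨
     (v.f i = j ∧ v.g j = i ∧ v.s (i, j) = false ∧
        ((a = 1 ∧ c = 1) ∨ (a = 1 ∧ c = 2) ∨ (a = 2 ∧ c = 2))) ∨
     (v.f i = j ∧ v.g j = i ∧ v.s (i, j) = true ∧
        ((a = 1 ∧ c = 1) ∨ (a = 2 ∧ c = 1) ∨ (a = 2 ∧ c = 2)))) }

/-!
A route `(a, (i, j), c)` reads as a pair of threshold constraints on a clique vector: `a = 1`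
asks `j ≤ f i`, `a = 2` asks `f i ≤ j`, and likewise `c = 1`, `c = 2` compare `g j` with `i`.
Routes on distinct edges conflict exactly when their constraints are incompatible, while on a
common edge `(1, ·, 2)` and `(2, ·, 1)` are both compatible with `f i = j, g j = i` and the sign
decides between them. So `φ v` is the set of routes compatible with `v`; it is a
clique, and a maximal one because it carries both `α`-routes at `(i, f i)` and both `γ`-routes
at `(g j, j)`, which also recover `f` and `g` from `φ v`.

Conversely, in a maximal clique every `i ∈ S` has a neighbour carrying both `α`-routes: the
largest neighbour carries an `α₂`-route, and maximality forces an `α₁`-route at the smallest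
neighbour carrying an `α₂`-route. Transposing `H` gives the same for `T`. Choosing `f`, `g` this
way and `s` by the presence of `(2, (i, j), 1)` yields `v` with `C ⊆ φ v`, so `C = φ v`.
-/

theorem Conflict.symm {r r' : Route} (h : Conflict r r') : Conflict r' r := by
  rcases h with ⟨h₁, h₂⟩ | ⟨h₁, h₂, h₃⟩ | ⟨h₁, h₂, h₃⟩
  · exact .inl ⟨h₁.symm, by tauto⟩
  · exact .inr (.inl ⟨h₁.symm, h₂.symm, by tauto⟩)
  · exact .inr (.inr ⟨h₁.symm, h₂.symm, by tauto⟩)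

theorem conflict_irrefl (r : Route) : ¬ Conflict r r := by
  rintro (⟨-, h⟩ | ⟨-, h, -⟩ | ⟨-, h, -⟩)
  · omega
  · exact h rfl
  · exact h rfl

def CoherentWith (r : Route) (C : Set Route) : Prop :=
  ∀ r' ∈ C, ¬ Conflict r r'

/-- Routes of `C` through `β_{i,j}` use both `α_{1,i}` and `α_{2,i}`. -/
def BothAlpha (C : Set Route) (i j : ℕ) : Prop :=
  (∃ c, (1, (i, j), c) ∈ C) ∧ ∃ c, (2, (i, j), c) ∈ C

/-- Routes of `C` through `β_{i,j}` use both `γ_{j,1}` and `γ_{j,2}`. -/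
def BothGamma (C : Set Route) (i j : ℕ) : Prop :=
  (∃ a, (a, (i, j), 1) ∈ C) ∧ ∃ a, (a, (i, j), 2) ∈ C

section Cliques

variable {E : Finset (ℕ × ℕ)} {C : Set Route}

theorem IsClique.coherentWith (hC : IsClique E C) {r : Route} (hr : r ∈ C) :
    CoherentWith r C := by
  intro r' hr'
  rcases eq_or_ne r r' with rfl | hne
  · exact conflict_irrefl r
  · exact hC.2 r hr r' hr' hne

theorem isMaxClique_iff :
    IsMaxClique E C ↔ IsClique E C ∧ ∀ r, IsRoute E r → CoherentWith r C → r ∈ C := by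
  refine ⟨fun hC => ⟨hC.1, fun r hr hcoh => ?_⟩, fun ⟨hC, hmax⟩ => ⟨hC, fun C' hC' hsub => ?_⟩⟩
  · have hins : IsClique E (insert r C) := by
      refine ⟨Set.forall_mem_insert.2 ⟨hr, hC.1.1⟩, ?_⟩
      rintro x (rfl | hx) y (rfl | hy) hne
      · exact absurd rfl hne
      · exact hcoh y hy
      · exact fun h => hcoh x hx h.symm
      · exact hC.1.2 x hx y hy hne
    exact hC.2 _ hins (Set.subset_insert r C) ▸ Set.mem_insert r C
  · refine Set.Subset.antisymm (fun r hr => hmax r (hC'.1 r hr) ?_) hsub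
    exact fun r' hr' => hC'.coherentWith hr r' (hsub hr')

theorem IsMaxClique.exists_conflict (hC : IsMaxClique E C) {r : Route} (hr : IsRoute E r)
    (hn : r ∉ C) : ∃ r' ∈ C, Conflict r r' := by
  by_contra! h
  exact hn ((isMaxClique_iff.1 hC).2 r hr h)

theorem IsClique.le_of_gamma_two_of_gamma_one (hC : IsClique E C) {a₁ a₂ i₁ i₂ j : ℕ}
    (h₁ : (a₁, (i₁, j), 2) ∈ C) (h₂ : (a₂, (i₂, j), 1) ∈ C) : i₂ ≤ i₁ := by
  by_contra! hlt
  exact hC.coherentWith h₁ _ h₂ (.inr (.inr ⟨rfl, hlt.ne, .inl ⟨hlt, rfl, rfl⟩⟩))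

theorem CoherentWith.alpha_of_bothAlpha {a i j c j₀ : ℕ} (h : CoherentWith (a, (i, j), c) C)
    (ha : a = 1 ∨ a = 2) (hb : BothAlpha C i j₀) : (j₀ < j → a = 2) ∧ (j < j₀ → a = 1) := by
  obtain ⟨⟨c₁, h₁⟩, ⟨c₂, h₂⟩⟩ := hb
  refine ⟨fun hlt => ha.resolve_left ?_, fun hlt => ha.resolve_right ?_⟩
  · rintro rfl
    exact h _ h₂ (.inr (.inl ⟨rfl, hlt.ne', .inr ⟨hlt, rfl, rfl⟩⟩))
  · rintro rfl
    exact h _ h₁ (.inr (.inl ⟨rfl, hlt.ne, .inl ⟨hlt, rfl, rfl⟩⟩))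

theorem CoherentWith.gamma_of_bothGamma {a i j c i₀ : ℕ} (h : CoherentWith (a, (i, j), c) C)
    (hc : c = 1 ∨ c = 2) (hb : BothGamma C i₀ j) : (i₀ < i → c = 2) ∧ (i < i₀ → c = 1) := by
  obtain ⟨⟨a₁, h₁⟩, ⟨a₂, h₂⟩⟩ := hb
  refine ⟨fun hlt => hc.resolve_left ?_, fun hlt => hc.resolve_right ?_⟩
  · rintro rfl
    exact h _ h₂ (.inr (.inr ⟨rfl, hlt.ne', .inr ⟨hlt, rfl, rfl⟩⟩))
  · rintro rfl
    exact h _ h₁ (.inr (.inr ⟨rfl, hlt.ne, .inl ⟨hlt, rfl, rfl⟩⟩))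

end Cliques

section CliqueMap

variable {n m : ℕ} {E : Finset (ℕ × ℕ)} (v : CliqueVec n m E)

theorem mem_phi_iff (a i j c : ℕ) :
    (a, (i, j), c) ∈ phi v ↔
      (i, j) ∈ E ∧ (a = 1 ∨ a = 2) ∧ (c = 1 ∨ c = 2) ∧
      (v.f i < j → a = 2) ∧ (j < v.f i → a = 1) ∧
      (v.g j < i → c = 2) ∧ (i < v.g j → c = 1) ∧
      (v.f i = j → v.g j = i → a = 2 → c = 1 → v.s (i, j) = true) ∧
      (v.f i = j → v.g j = i → a = 1 → c = 2 → v.s (i, j) = false) := by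
  simp only [phi, Set.mem_ofPred_eq, Prod.mk.injEq, and_assoc, exists_and_left, exists_eq_left']
  exact and_congr_right fun _ => by grind

theorem bothAlpha_phi {i : ℕ} (hi : i ∈ Icc 1 n) : BothAlpha (phi v) i (v.f i) := by
  refine ⟨⟨if v.g (v.f i) < i then 2 else 1, ?_⟩, ⟨if i < v.g (v.f i) then 1 else 2, ?_⟩⟩ <;>
    exact (mem_phi_iff v _ _ _ _).2 ⟨v.hf i hi, by grind⟩

theorem bothGamma_phi {j : ℕ} (hj : j ∈ Icc 1 m) : BothGamma (phi v) (v.g j) j := by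
  refine ⟨⟨if v.f (v.g j) < j then 2 else 1, ?_⟩, ⟨if j < v.f (v.g j) then 1 else 2, ?_⟩⟩ <;>
    exact (mem_phi_iff v _ _ _ _).2 ⟨v.hg j hj, by grind⟩

theorem f_eq_of_bothAlpha_phi {i j : ℕ} (h : BothAlpha (phi v) i j) : v.f i = j := by
  obtain ⟨⟨c₁, h₁⟩, ⟨c₂, h₂⟩⟩ := h
  rw [mem_phi_iff] at h₁ h₂
  omega

theorem g_eq_of_bothGamma_phi {i j : ℕ} (h : BothGamma (phi v) i j) : v.g j = i := by
  obtain ⟨⟨a₁, h₁⟩, ⟨a₂, h₂⟩⟩ := h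
  rw [mem_phi_iff] at h₁ h₂
  omega

theorem s_eq_true_iff (p : ℕ × ℕ) :
    v.s p = true ↔ v.f p.1 = p.2 ∧ v.g p.2 = p.1 ∧ (2, p, 1) ∈ phi v := by
  obtain ⟨i, j⟩ := p
  have hE : v.s (i, j) = true → (i, j) ∈ E := fun hs =>
    by_contra fun hp => Bool.false_ne_true (v.hs' _ hp ▸ hs)
  have hs := v.hs (i, j)
  rw [mem_phi_iff]
  grind

theorem phi_edge_coherent {i j : ℕ} (h₁₂ : (1, (i, j), 2) ∈ phi v)
    (h₂₁ : (2, (i, j), 1) ∈ phi v) : False := by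
  obtain ⟨-, -, -, hf₁, -, -, hg₁, -, hs₁⟩ := (mem_phi_iff v 1 i j 2).1 h₁₂
  obtain ⟨-, -, -, -, hf₂, hg₂, -, hs₂, -⟩ := (mem_phi_iff v 2 i j 1).1 h₂₁
  have hf : v.f i = j := by omega
  have hg : v.g j = i := by omega
  exact Bool.false_ne_true ((hs₁ hf hg rfl rfl).symm.trans (hs₂ hf hg rfl rfl))

theorem phi_isClique : IsClique E (phi v) := by
  refine ⟨fun ⟨a, ⟨i, j⟩, c⟩ hr => ?_, fun ⟨a, ⟨i, j⟩, c⟩ hr ⟨a', ⟨i', j'⟩, c'⟩ hr' _ hconf => ?_⟩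
  · obtain ⟨hE, ha, hc, -⟩ := (mem_phi_iff v a i j c).1 hr
    exact ⟨ha, hE, hc⟩
  obtain ⟨-, -, -, hf₁, hf₂, hg₁, hg₂, -⟩ := (mem_phi_iff v a i j c).1 hr
  obtain ⟨-, -, -, hf₁', hf₂', hg₁', hg₂', -⟩ := (mem_phi_iff v a' i' j' c').1 hr'
  simp only [Conflict, Prod.mk.injEq] at hconf
  rcases hconf with ⟨⟨rfl, rfl⟩, ⟨rfl, rfl, rfl, rfl⟩ | ⟨rfl, rfl, rfl, rfl⟩⟩ | ⟨rfl, h⟩ | ⟨rfl, h⟩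
  · exact phi_edge_coherent v hr hr'
  · exact phi_edge_coherent v hr' hr
  · omega
  · omega

theorem mem_phi_of_coherentWith (hE : ∀ p ∈ E, 1 ≤ p.1 ∧ p.1 ≤ n ∧ 1 ≤ p.2 ∧ p.2 ≤ m)
    {C : Set Route} (hf : ∀ i ∈ Icc 1 n, BothAlpha C i (v.f i))
    (hg : ∀ j ∈ Icc 1 m, BothGamma C (v.g j) j) {a i j c : ℕ} (hr : IsRoute E (a, (i, j), c))
    (hcoh : CoherentWith (a, (i, j), c) C)
    (hs₁ : v.f i = j → v.g j = i → a = 2 → c = 1 → v.s (i, j) = true)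
    (hs₂ : v.f i = j → v.g j = i → a = 1 → c = 2 → v.s (i, j) = false) :
    (a, (i, j), c) ∈ phi v := by
  obtain ⟨ha, hij, hc⟩ := hr
  have hi : i ∈ Icc 1 n := mem_Icc.2 ⟨(hE _ hij).1, (hE _ hij).2.1⟩
  have hj : j ∈ Icc 1 m := mem_Icc.2 ⟨(hE _ hij).2.2.1, (hE _ hij).2.2.2⟩
  obtain ⟨hα₁, hα₂⟩ := hcoh.alpha_of_bothAlpha ha (hf i hi)
  obtain ⟨hγ₁, hγ₂⟩ := hcoh.gamma_of_bothGamma hc (hg j hj)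
  exact (mem_phi_iff v a i j c).2 ⟨hij, ha, hc, hα₁, hα₂, hγ₁, hγ₂, hs₁, hs₂⟩

theorem phi_isMaxClique (hE : ∀ p ∈ E, 1 ≤ p.1 ∧ p.1 ≤ n ∧ 1 ≤ p.2 ∧ p.2 ≤ m) :
    IsMaxClique E (phi v) := by
  refine isMaxClique_iff.2 ⟨phi_isClique v, fun ⟨a, ⟨i, j⟩, c⟩ hr hcoh => ?_⟩
  refine mem_phi_of_coherentWith v hE (fun i hi => bothAlpha_phi v hi)
    (fun j hj => bothGamma_phi v hj) hr hcoh (fun hf hg ha hc => ?_) (fun hf hg ha hc => ?_)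
  all_goals subst ha hc; by_contra hs
  · refine hcoh _ ((mem_phi_iff v 1 i j 2).2 ⟨hr.2.1, by grind⟩) ?_
    exact .inl ⟨rfl, .inr ⟨rfl, rfl, rfl, rfl⟩⟩
  · refine hcoh _ ((mem_phi_iff v 2 i j 1).2 ⟨hr.2.1, by grind⟩) ?_
    exact .inl ⟨rfl, .inl ⟨rfl, rfl, rfl, rfl⟩⟩

end CliqueMap

theorem CliqueVec.ext {n m : ℕ} {E : Finset (ℕ × ℕ)} {v w : CliqueVec n m E} (hf : v.f = w.f)
    (hg : v.g = w.g) (hs : v.s = w.s) : v = w := by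
  cases v; cases w; subst hf hg hs; rfl

theorem phi_injective {n m : ℕ} {E : Finset (ℕ × ℕ)} :
    Function.Injective (phi : CliqueVec n m E → Set Route) := by
  intro v w h
  have hf : v.f = w.f := funext fun i => by
    by_cases hi : i ∈ Icc 1 n
    · exact (f_eq_of_bothAlpha_phi w (h ▸ bothAlpha_phi v hi)).symm
    · rw [v.hf' i hi, w.hf' i hi]
  have hg : v.g = w.g := funext fun j => by
    by_cases hj : j ∈ Icc 1 m
    · exact (g_eq_of_bothGamma_phi w (h ▸ bothGamma_phi v hj)).symm
    · rw [v.hg' j hj, w.hg' j hj]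
  refine CliqueVec.ext hf hg (funext fun p => Bool.eq_iff_iff.2 ?_)
  rw [s_eq_true_iff, s_eq_true_iff, hf, hg, h]

theorem mem_Nbr {E : Finset (ℕ × ℕ)} {i j : ℕ} : j ∈ Nbr E i ↔ (i, j) ∈ E := by
  simp [Nbr]

theorem mem_Nbr' {E : Finset (ℕ × ℕ)} {i j : ℕ} : i ∈ Nbr' E j ↔ (i, j) ∈ E := by
  simp [Nbr']

def Route.transpose (r : Route) : Route := (r.2.2, (r.2.1.2, r.2.1.1), r.1)

theorem Conflict.transpose {r r' : Route} (h : Conflict r r') :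
    Conflict r.transpose r'.transpose := by
  rcases h with ⟨h₁, h₂⟩ | ⟨h₁, h₂, h₃⟩ | ⟨h₁, h₂, h₃⟩
  · exact .inl ⟨congrArg Prod.swap h₁, by tauto⟩
  · exact .inr (.inr ⟨h₁, h₂, by tauto⟩)
  · exact .inr (.inl ⟨h₁, h₂, by tauto⟩)

section MaximalCliques

variable {E : Finset (ℕ × ℕ)} {C : Set Route}

theorem isRoute_image_swap_iff {r : Route} :
    IsRoute (E.image Prod.swap) r ↔ IsRoute E r.transpose := by
  obtain ⟨a, ⟨i, j⟩, c⟩ := r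
  simp only [IsRoute, Route.transpose]
  rw [show (i, j) = Prod.swap (j, i) from rfl, Prod.swap_injective.mem_finset_image]
  tauto

theorem IsMaxClique.preimage_transpose (hC : IsMaxClique E C) :
    IsMaxClique (E.image Prod.swap) (Route.transpose ⁻¹' C) := by
  refine isMaxClique_iff.2 ⟨⟨fun r hr => ?_, fun r hr r' hr' hne h => ?_⟩, fun r hr hcoh => ?_⟩
  · exact isRoute_image_swap_iff.2 (hC.1.1 _ hr)
  · exact hC.1.2 _ hr _ hr' (fun e => hne (congrArg Route.transpose e)) h.transpose
  · exact (isMaxClique_iff.1 hC).2 _ (isRoute_image_swap_iff.1 hr)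
      fun r' hr' h => hcoh r'.transpose hr' h.transpose

theorem IsMaxClique.exists_alpha_two (hC : IsMaxClique E C) {i j : ℕ} (hij : (i, j) ∈ E)
    (hright : ∀ a' j' c', (a', (i, j'), c') ∈ C → j < j' → a' = 2) :
    ∃ c, (2, (i, j), c) ∈ C := by
  -- `(2, (i, j), 2)` and `(2, (i, j), 1)` are missing from `C`; the routes they conflict with
  -- clash with each other in column `j`.
  by_contra! h
  obtain ⟨i₁, a₁, hi₁, h₁⟩ : ∃ i₁ a₁, i < i₁ ∧ (a₁, (i₁, j), 1) ∈ C := by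
    obtain ⟨⟨a₁, ⟨i₁, j₁⟩, c₁⟩, hr₁, k₁⟩ := hC.exists_conflict ⟨.inr rfl, hij, .inr rfl⟩ (h 2)
    simp only [Conflict, Prod.mk.injEq] at k₁
    rcases k₁ with ⟨-, k⟩ | ⟨rfl, -, k⟩ | ⟨rfl, -, k⟩
    · omega
    · have := hright _ _ _ hr₁
      omega
    · obtain ⟨hlt, rfl⟩ : i < i₁ ∧ c₁ = 1 := by omega
      exact ⟨i₁, a₁, hlt, hr₁⟩
  obtain ⟨i₂, a₂, hi₂, h₂⟩ : ∃ i₂ a₂, i₂ ≤ i ∧ (a₂, (i₂, j), 2) ∈ C := by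
    obtain ⟨⟨a₂, ⟨i₂, j₂⟩, c₂⟩, hr₂, k₂⟩ := hC.exists_conflict ⟨.inr rfl, hij, .inl rfl⟩ (h 1)
    simp only [Conflict, Prod.mk.injEq] at k₂
    rcases k₂ with ⟨⟨rfl, rfl⟩, k⟩ | ⟨rfl, -, k⟩ | ⟨rfl, -, k⟩
    · obtain rfl : c₂ = 2 := by omega
      exact ⟨_, a₂, le_rfl, hr₂⟩
    · have := hright _ _ _ hr₂
      omega
    · obtain ⟨hlt, rfl⟩ : i₂ < i ∧ c₂ = 2 := by omega
      exact ⟨i₂, a₂, hlt.le, hr₂⟩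
  have := hC.1.le_of_gamma_two_of_gamma_one h₂ h₁
  omega

theorem IsMaxClique.exists_alpha_one (hC : IsMaxClique E C) {i j : ℕ} (hij : (i, j) ∈ E)
    (hleft : ∀ a' j' c', (a', (i, j'), c') ∈ C → j' < j → a' = 1) :
    ∃ c, (1, (i, j), c) ∈ C := by
  by_contra! h
  obtain ⟨i₁, a₁, hi₁, h₁⟩ : ∃ i₁ a₁, i₁ < i ∧ (a₁, (i₁, j), 2) ∈ C := by
    obtain ⟨⟨a₁, ⟨i₁, j₁⟩, c₁⟩, hr₁, k₁⟩ := hC.exists_conflict ⟨.inl rfl, hij, .inl rfl⟩ (h 1)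
    simp only [Conflict, Prod.mk.injEq] at k₁
    rcases k₁ with ⟨-, k⟩ | ⟨rfl, -, k⟩ | ⟨rfl, -, k⟩
    · omega
    · have := hleft _ _ _ hr₁
      omega
    · obtain ⟨hlt, rfl⟩ : i₁ < i ∧ c₁ = 2 := by omega
      exact ⟨i₁, a₁, hlt, hr₁⟩
  obtain ⟨i₂, a₂, hi₂, h₂⟩ : ∃ i₂ a₂, i ≤ i₂ ∧ (a₂, (i₂, j), 1) ∈ C := by
    obtain ⟨⟨a₂, ⟨i₂, j₂⟩, c₂⟩, hr₂, k₂⟩ := hC.exists_conflict ⟨.inl rfl, hij, .inr rfl⟩ (h 2)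
    simp only [Conflict, Prod.mk.injEq] at k₂
    rcases k₂ with ⟨⟨rfl, rfl⟩, k⟩ | ⟨rfl, -, k⟩ | ⟨rfl, -, k⟩
    · obtain rfl : c₂ = 1 := by omega
      exact ⟨_, a₂, le_rfl, hr₂⟩
    · have := hleft _ _ _ hr₂
      omega
    · obtain ⟨hlt, rfl⟩ : i < i₂ ∧ c₂ = 1 := by omega
      exact ⟨i₂, a₂, hlt.le, hr₂⟩
  have := hC.1.le_of_gamma_two_of_gamma_one h₁ h₂
  omega

theorem IsMaxClique.exists_bothAlpha (hC : IsMaxClique E C) {i : ℕ} (hi : (Nbr E i).Nonempty) :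
    ∃ j, (i, j) ∈ E ∧ BothAlpha C i j := by
  classical
  have hex : ∃ j, (i, j) ∈ E ∧ ∃ c, (2, (i, j), c) ∈ C := by
    obtain ⟨j, hj, hmax⟩ := (Nbr E i).exists_max_image id hi
    refine ⟨j, mem_Nbr.1 hj, hC.exists_alpha_two (mem_Nbr.1 hj) fun a' j' c' h hlt => ?_⟩
    exact absurd (hmax j' (mem_Nbr.2 (hC.1.1 _ h).2.1)) (not_le.2 hlt)
  obtain ⟨hj₀, h₂⟩ := Nat.find_spec hex
  refine ⟨Nat.find hex, hj₀, hC.exists_alpha_one hj₀ fun a' j' c' h hlt => ?_, h₂⟩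
  obtain ⟨ha | rfl, hij, -⟩ := hC.1.1 _ h
  · exact ha
  · exact absurd ⟨hij, c', h⟩ (Nat.find_min hex hlt)

theorem IsMaxClique.exists_bothGamma (hC : IsMaxClique E C) {j : ℕ} (hj : (Nbr' E j).Nonempty) :
    ∃ i, (i, j) ∈ E ∧ BothGamma C i j := by
  have hj' : (Nbr (E.image Prod.swap) j).Nonempty := by
    obtain ⟨i, hi⟩ := hj
    exact ⟨i, mem_Nbr.2 (mem_image_of_mem Prod.swap (mem_Nbr'.1 hi))⟩
  obtain ⟨i, hij, hb⟩ := hC.preimage_transpose.exists_bothAlpha hj'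
  refine ⟨i, ?_, hb⟩
  rwa [show (j, i) = Prod.swap (i, j) from rfl, Prod.swap_injective.mem_finset_image] at hij

end MaximalCliques

theorem exists_fun_forall_and_eq_zero_off {α β : Type*} [Zero β] {p : α → Prop}
    {P : α → β → Prop} (h : ∀ x, p x → ∃ y, P x y) :
    ∃ f : α → β, (∀ x, p x → P x (f x)) ∧ ∀ x, ¬ p x → f x = 0 := by
  classical
  choose! f hf using h
  exact ⟨fun x => if p x then f x else 0, fun x hx => by simpa [hx] using hf x hx,
    fun x hx => if_neg hx⟩

theorem IsMaxClique.exists_phi_eq {n m : ℕ} {E : Finset (ℕ × ℕ)} {C : Set Route}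
    (hE : ∀ p ∈ E, 1 ≤ p.1 ∧ p.1 ≤ n ∧ 1 ≤ p.2 ∧ p.2 ≤ m)
    (hS : ∀ i ∈ Icc 1 n, (Nbr E i).Nonempty) (hT : ∀ j ∈ Icc 1 m, (Nbr' E j).Nonempty)
    (hC : IsMaxClique E C) : ∃ v : CliqueVec n m E, phi v = C := by
  classical
  obtain ⟨f, hf, hf₀⟩ := exists_fun_forall_and_eq_zero_off fun i hi => hC.exists_bothAlpha (hS i hi)
  obtain ⟨g, hg, hg₀⟩ := exists_fun_forall_and_eq_zero_off fun j hj => hC.exists_bothGamma (hT j hj)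
  let v : CliqueVec n m E :=
    { f, g
      s := fun p => decide ((2, p, 1) ∈ C ∧ f p.1 = p.2 ∧ g p.2 = p.1)
      hf := fun i hi => (hf i hi).1
      hg := fun j hj => (hg j hj).1
      hs := fun _ _ hp => (of_decide_eq_true hp).2
      hf' := hf₀
      hg' := hg₀
      hs' := fun _ hp => decide_eq_false fun h => hp (hC.1.1 _ h.1).2.1 }
  refine ⟨v, hC.2 _ (phi_isClique v) fun ⟨a, ⟨i, j⟩, c⟩ hr => ?_⟩
  refine mem_phi_of_coherentWith v hE (fun i hi => (hf i hi).2) (fun j hj => (hg j hj).2)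
    (hC.1.1 _ hr) (hC.1.coherentWith hr) (fun hfi hgj ha hc => ?_) (fun _ _ ha hc => ?_)
  all_goals subst ha hc
  · exact decide_eq_true ⟨hr, hfi, hgj⟩
  · refine decide_eq_false fun h => hC.1.coherentWith hr _ h.1 ?_
    exact .inl ⟨rfl, .inl ⟨rfl, rfl, rfl, rfl⟩⟩

theorem phi_bijection_general (n m : ℕ) (E : Finset (ℕ × ℕ))
    (hE : ∀ p ∈ E, 1 ≤ p.1 ∧ p.1 ≤ n ∧ 1 ≤ p.2 ∧ p.2 ≤ m)
    (hdegS : ∀ i ∈ Finset.Icc 1 n, 2 ≤ (Nbr E i).card)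
    (hdegT : ∀ j ∈ Finset.Icc 1 m, 2 ≤ (Nbr' E j).card) :
    (∀ v : CliqueVec n m E, IsMaxClique E (phi v)) ∧
    Function.Injective (phi : CliqueVec n m E → Set Route) ∧
    (∀ C : Set Route, IsMaxClique E C → ∃ v : CliqueVec n m E, phi v = C) := by
  refine ⟨fun v => phi_isMaxClique v hE, phi_injective, fun C hC => hC.exists_phi_eq hE ?_ ?_⟩
  · exact fun i hi => card_pos.1 (by linarith [hdegS i hi])
  · exact fun j hj => card_pos.1 (by linarith [hdegT j hj])

/-- The clique map `φ` is a bijection from clique vectors onto maximal cliques. -/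
theorem phi_bijection (n m : ℕ) (hn : 1 ≤ n) (hm : 1 ≤ m) (E : Finset (ℕ × ℕ))
    (hE : ∀ p ∈ E, 1 ≤ p.1 ∧ p.1 ≤ n ∧ 1 ≤ p.2 ∧ p.2 ≤ m)
    (hdegS : ∀ i ∈ Finset.Icc 1 n, 2 ≤ (Nbr E i).card)
    (hdegT : ∀ j ∈ Finset.Icc 1 m, 2 ≤ (Nbr' E j).card) :
    (∀ v : CliqueVec n m E, IsMaxClique E (phi v)) ∧
    Function.Injective (phi : CliqueVec n m E → Set Route) ∧
    (∀ C : Set Route, IsMaxClique E C → ∃ v : CliqueVec n m E, phi v = C) :=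
  phi_bijection_general n m E hE hdegS hdegT
end

section
/- Assume that for every nonempty set F with F ⊆ V₀ for some V₀ ∈ 𝒯, there exists a unique Cmax(F) ∈ 𝒯 containing F such that for every V ∈ 𝒯 with F ⊆ V there is a chain V = V_0 ⋖ V_1 ⋖ ⋯ ⋖ V_k = Cmax(F) in (𝒯, ≤) with F ⊆ V_l for every l. Then the half-open cells conv(V) ∖ ⋃_{V' ∈ 𝒯, V ⋖ V'} conv(V'), for V ∈ 𝒯, are pairwise disjoint and their union is P. -/
/-!
A point `x` of a simplex `conv V₀` has a carrier: the least face `F ⊆ V₀` whose hull contains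
`x`. Because simplices of the triangulation meet in common faces, the simplices containing `x` are
exactly those containing `F`. The half-open cell of `V` contains `x` precisely when `V` contains
`x` but no upper cover of `V` does; since every simplex containing `F` is joined to `Cmax(F)` by a
chain of covers through simplices containing `F`, and `≤` is antisymmetric, `Cmax(F)` is the only
such simplex.
-/

open Finset

section Carrier

variable {R E : Type*} [Field R] [LinearOrder R] [AddCommGroup E] [Module R E]

lemma AffineIndependent.exists_isLeast_mem_convexHull [IsStrictOrderedRing R] {s : Finset E}
    (hs : AffineIndependent R ((↑) : s → E)) {x : E} (hx : x ∈ convexHull R (s : Set E)) :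
    ∃ t, IsLeast {u : Finset E | u ⊆ s ∧ x ∈ convexHull R (u : Set E)} t := by
  classical
  obtain ⟨t, ht, htmin⟩ :=
    (s.powerset.filter fun u : Finset E => x ∈ convexHull R (u : Set E)).exists_min_image
      Finset.card ⟨s, by simpa using hx⟩
  simp only [mem_filter, mem_powerset] at ht htmin
  refine ⟨t, ht, fun u ⟨hus, hxu⟩ => ?_⟩
  have hx_inter : x ∈ convexHull R ((t ∩ u : Finset E) : Set E) := by
    rw [coe_inter, hs.convexHull_inter ht.1 hus]
    exact ⟨ht.2, hxu⟩
  have : t ∩ u = t := eq_of_subset_of_card_le inter_subset_left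
    (htmin _ ⟨inter_subset_left.trans ht.1, hx_inter⟩)
  exact this ▸ inter_subset_right

lemma subset_of_isLeast_mem_convexHull [DecidableEq E] {V₀ V F : Finset E} {x : E}
    (hinter : convexHull R (V₀ : Set E) ∩ convexHull R (V : Set E) =
      convexHull R ((V₀ ∩ V : Finset E) : Set E))
    (hF : IsLeast {u : Finset E | u ⊆ V₀ ∧ x ∈ convexHull R (u : Set E)} F)
    (hxV : x ∈ convexHull R (V : Set E)) : F ⊆ V := by
  have hx_inter : x ∈ convexHull R ((V₀ ∩ V : Finset E) : Set E) :=
    hinter ▸ ⟨convexHull_mono (by exact_mod_cast hF.1.1) hF.1.2, hxV⟩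
  exact (hF.2 ⟨inter_subset_left, hx_inter⟩).trans inter_subset_right

end Carrier

section CoverChain

variable {α : Type*} {𝒯 : Set α} {le cov : α → α → Prop}

lemma le_of_cov_chain (hrefl : ∀ V ∈ 𝒯, le V V)
    (htrans : ∀ V ∈ 𝒯, ∀ V' ∈ 𝒯, ∀ V'' ∈ 𝒯, le V V' → le V' V'' → le V V'')
    (hcov : ∀ V ∈ 𝒯, ∀ V' ∈ 𝒯, cov V V' → le V V')
    {c : ℕ → α} {k : ℕ} (hc : ∀ l ≤ k, c l ∈ 𝒯) (hstep : ∀ l < k, cov (c l) (c (l + 1))) :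
    le (c 0) (c k) := by
  induction k with
  | zero => exact hrefl _ (hc 0 le_rfl)
  | succ k ih =>
    have hck := hc k k.le_succ
    exact htrans _ (hc 0 (Nat.zero_le _)) _ hck _ (hc _ le_rfl)
      (ih (fun l hl => hc l (hl.trans k.le_succ)) (fun l hl => hstep l (hl.trans k.lt_succ_self)))
      (hcov _ hck _ (hc _ le_rfl) (hstep k k.lt_succ_self))

lemma cov_maximal_iff_eq_of_cov_chains (hrefl : ∀ V ∈ 𝒯, le V V)
    (hantisymm : ∀ V ∈ 𝒯, ∀ V' ∈ 𝒯, le V V' → le V' V → V = V')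
    (htrans : ∀ V ∈ 𝒯, ∀ V' ∈ 𝒯, ∀ V'' ∈ 𝒯, le V V' → le V' V'' → le V V'')
    (hcov : ∀ V ∈ 𝒯, ∀ V' ∈ 𝒯, cov V V' → le V V' ∧ V ≠ V')
    {P : α → Prop} {Cm : α} (hCm : Cm ∈ 𝒯) (hPCm : P Cm)
    (hchain : ∀ V ∈ 𝒯, P V → ∃ k : ℕ, ∃ c : ℕ → α, c 0 = V ∧ c k = Cm ∧
      (∀ l ≤ k, c l ∈ 𝒯 ∧ P (c l)) ∧ ∀ l < k, cov (c l) (c (l + 1)))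
    {V : α} (hV : V ∈ 𝒯) :
    (P V ∧ ∀ W ∈ 𝒯, cov V W → ¬ P W) ↔ V = Cm := by
  constructor
  · rintro ⟨hPV, hnocov⟩
    obtain ⟨k, c, rfl, rfl, hc, hstep⟩ := hchain V hV hPV
    cases k with
    | zero => rfl
    | succ k =>
      have hc1 := hc 1 (by omega)
      exact absurd hc1.2 (hnocov _ hc1.1 (hstep 0 k.succ_pos))
  · rintro rfl
    refine ⟨hPCm, fun W hW hcovW hPW => ?_⟩
    obtain ⟨k, c, rfl, hck, hc, hstep⟩ := hchain W hW hPW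
    have hle : le (c 0) V :=
      hck ▸ le_of_cov_chain hrefl htrans (fun V hV V' hV' h => (hcov V hV V' hV' h).1)
        (fun l hl => (hc l hl).1) hstep
    obtain ⟨hVle, hne⟩ := hcov V hV _ hW hcovW
    exact hne (hantisymm V hV _ hW hVle hle)

end CoverChain

lemma disjoint_and_biUnion_eq_of_existsUnique_mem {ι X : Type*} {𝒯 : Set ι}
    {A B : ι → Set X} (hAB : ∀ i, A i ⊆ B i)
    (hunique : ∀ x ∈ ⋃ i ∈ 𝒯, B i, ∃ j ∈ 𝒯, ∀ i ∈ 𝒯, x ∈ A i ↔ i = j) :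
    (∀ i ∈ 𝒯, ∀ i' ∈ 𝒯, i ≠ i' → A i ∩ A i' = ∅) ∧ ⋃ i ∈ 𝒯, A i = ⋃ i ∈ 𝒯, B i := by
  refine ⟨fun i hi i' hi' hne => Set.eq_empty_of_forall_notMem fun x ⟨hxi, hxi'⟩ => ?_,
    (Set.biUnion_mono subset_rfl fun i _ => hAB i).antisymm fun x hx => ?_⟩
  · obtain ⟨j, -, hj⟩ := hunique x (Set.mem_biUnion hi (hAB i hxi))
    exact hne (((hj i hi).1 hxi).trans ((hj i' hi').1 hxi').symm)
  · obtain ⟨j, hj, hjA⟩ := hunique x hx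
    exact Set.mem_biUnion hj ((hjA j hj).2 rfl)

theorem halfopen_decomposition_general (N : ℕ)
    (𝒯 : Finset (Finset (Fin N → ℝ)))
    (hindep : ∀ V ∈ 𝒯, AffineIndependent ℝ (fun p : {x // x ∈ V} => (p : Fin N → ℝ)))
    (hinter : ∀ V ∈ 𝒯, ∀ V' ∈ 𝒯,
      convexHull ℝ (V : Set (Fin N → ℝ)) ∩ convexHull ℝ (V' : Set (Fin N → ℝ)) =
        convexHull ℝ ((V ∩ V' : Finset (Fin N → ℝ)) : Set (Fin N → ℝ)))
    -- a partial order on 𝒯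
    (le : Finset (Fin N → ℝ) → Finset (Fin N → ℝ) → Prop)
    (hrefl : ∀ V ∈ 𝒯, le V V)
    (hantisymm : ∀ V ∈ 𝒯, ∀ V' ∈ 𝒯, le V V' → le V' V → V = V')
    (htrans : ∀ V ∈ 𝒯, ∀ V' ∈ 𝒯, ∀ V'' ∈ 𝒯, le V V' → le V' V'' → le V V'')
    -- its cover relation
    (cov : Finset (Fin N → ℝ) → Finset (Fin N → ℝ) → Prop)
    (hcov : ∀ V ∈ 𝒯, ∀ V' ∈ 𝒯,
      (cov V V' ↔ (le V V' ∧ V ≠ V' ∧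
        ¬ ∃ W ∈ 𝒯, W ≠ V ∧ W ≠ V' ∧ le V W ∧ le W V')))
    -- existence of Cmax(F) reachable by saturated chains containing F
    (hCmax : ∀ F : Finset (Fin N → ℝ), F.Nonempty → (∃ V₀ ∈ 𝒯, F ⊆ V₀) →
      ∃! Cm : Finset (Fin N → ℝ), Cm ∈ 𝒯 ∧ F ⊆ Cm ∧
        ∀ V ∈ 𝒯, F ⊆ V → ∃ k : ℕ, ∃ c : ℕ → Finset (Fin N → ℝ),
          c 0 = V ∧ c k = Cm ∧ (∀ l ≤ k, c l ∈ 𝒯 ∧ F ⊆ c l) ∧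
          (∀ l < k, cov (c l) (c (l + 1)))) :
    -- the half-open cells are pairwise disjoint and their union is P
    (∀ V ∈ 𝒯, ∀ V' ∈ 𝒯, V ≠ V' →
      ((convexHull ℝ (V : Set (Fin N → ℝ)) \
          ⋃ W ∈ {W | W ∈ 𝒯 ∧ cov V W}, convexHull ℝ (W : Set (Fin N → ℝ))) ∩
       (convexHull ℝ (V' : Set (Fin N → ℝ)) \
          ⋃ W ∈ {W | W ∈ 𝒯 ∧ cov V' W}, convexHull ℝ (W : Set (Fin N → ℝ)))) = ∅) ∧
    (⋃ V ∈ 𝒯, (convexHull ℝ (V : Set (Fin N → ℝ)) \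
        ⋃ W ∈ {W | W ∈ 𝒯 ∧ cov V W}, convexHull ℝ (W : Set (Fin N → ℝ)))) =
      ⋃ V ∈ 𝒯, convexHull ℝ (V : Set (Fin N → ℝ)) := by
  refine disjoint_and_biUnion_eq_of_existsUnique_mem (fun _ => Set.sdiff_subset) fun x hx => ?_
  obtain ⟨V₀, hV₀, hxV₀⟩ := Set.mem_iUnion₂.1 hx
  obtain ⟨F, hF⟩ := (hindep V₀ hV₀).exists_isLeast_mem_convexHull hxV₀
  have hFne : F.Nonempty := coe_nonempty.1 (convexHull_nonempty_iff.1 ⟨x, hF.1.2⟩)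
  have hxV_of_F :
      ∀ {V : Finset (Fin N → ℝ)}, F ⊆ V → x ∈ convexHull ℝ (V : Set (Fin N → ℝ)) :=
    fun hFV => convexHull_mono (by exact_mod_cast hFV) hF.1.2
  obtain ⟨Cm, ⟨hCm, hFCm, hchain⟩, -⟩ := hCmax F hFne ⟨V₀, hV₀, hF.1.1⟩
  refine ⟨Cm, hCm, fun V hV => ?_⟩
  simp only [Set.mem_sdiff, Set.mem_iUnion₂, Set.mem_ofPred_eq, not_exists, and_imp]
  refine cov_maximal_iff_eq_of_cov_chains (𝒯 := 𝒯)
    (P := fun V => x ∈ convexHull ℝ (V : Set (Fin N → ℝ))) hrefl hantisymm htrans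
    (fun V hV V' hV' h => ((hcov V hV V' hV').1 h).imp_right And.left) hCm (hxV_of_F hFCm)
    (fun V hV hxV => ?_) hV
  obtain ⟨k, c, hc0, hck, hc, hstep⟩ :=
    hchain V hV (subset_of_isLeast_mem_convexHull (hinter V₀ hV₀ V hV) hF hxV)
  exact ⟨k, c, hc0, hck, fun l hl => (hc l hl).imp_right hxV_of_F, hstep⟩

/-- Lemma on half-open decompositions induced by a poset structure on a
triangulation whose Hasse diagram is the dual graph. -/
theorem halfopen_decomposition (N d : ℕ) (hN : 1 ≤ N)
    (𝒯 : Finset (Finset (Fin N → ℝ)))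
    (hcard : ∀ V ∈ 𝒯, V.card = d + 1)
    (hindep : ∀ V ∈ 𝒯, AffineIndependent ℝ (fun p : {x // x ∈ V} => (p : Fin N → ℝ)))
    (hinter : ∀ V ∈ 𝒯, ∀ V' ∈ 𝒯,
      convexHull ℝ (V : Set (Fin N → ℝ)) ∩ convexHull ℝ (V' : Set (Fin N → ℝ)) =
        convexHull ℝ ((V ∩ V' : Finset (Fin N → ℝ)) : Set (Fin N → ℝ)))
    -- a partial order on 𝒯
    (le : Finset (Fin N → ℝ) → Finset (Fin N → ℝ) → Prop)
    (hrefl : ∀ V ∈ 𝒯, le V V)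
    (hantisymm : ∀ V ∈ 𝒯, ∀ V' ∈ 𝒯, le V V' → le V' V → V = V')
    (htrans : ∀ V ∈ 𝒯, ∀ V' ∈ 𝒯, ∀ V'' ∈ 𝒯, le V V' → le V' V'' → le V V'')
    -- its cover relation
    (cov : Finset (Fin N → ℝ) → Finset (Fin N → ℝ) → Prop)
    (hcov : ∀ V ∈ 𝒯, ∀ V' ∈ 𝒯,
      (cov V V' ↔ (le V V' ∧ V ≠ V' ∧
        ¬ ∃ W ∈ 𝒯, W ≠ V ∧ W ≠ V' ∧ le V W ∧ le W V')))
    -- the Hasse diagram is the dual graph of the triangulation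
    (hHasse : ∀ V ∈ 𝒯, ∀ V' ∈ 𝒯,
      ((cov V V' ∨ cov V' V) ↔ (V ≠ V' ∧ (V ∩ V').card = d)))
    -- existence of Cmax(F) reachable by saturated chains containing F
    (hCmax : ∀ F : Finset (Fin N → ℝ), F.Nonempty → (∃ V₀ ∈ 𝒯, F ⊆ V₀) →
      ∃! Cm : Finset (Fin N → ℝ), Cm ∈ 𝒯 ∧ F ⊆ Cm ∧
        ∀ V ∈ 𝒯, F ⊆ V → ∃ k : ℕ, ∃ c : ℕ → Finset (Fin N → ℝ),
          c 0 = V ∧ c k = Cm ∧ (∀ l ≤ k, c l ∈ 𝒯 ∧ F ⊆ c l) ∧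
          (∀ l < k, cov (c l) (c (l + 1)))) :
    -- the half-open cells are pairwise disjoint and their union is P
    (∀ V ∈ 𝒯, ∀ V' ∈ 𝒯, V ≠ V' →
      ((convexHull ℝ (V : Set (Fin N → ℝ)) \
          ⋃ W ∈ {W | W ∈ 𝒯 ∧ cov V W}, convexHull ℝ (W : Set (Fin N → ℝ))) ∩
       (convexHull ℝ (V' : Set (Fin N → ℝ)) \
          ⋃ W ∈ {W | W ∈ 𝒯 ∧ cov V' W}, convexHull ℝ (W : Set (Fin N → ℝ)))) = ∅) ∧
    (⋃ V ∈ 𝒯, (convexHull ℝ (V : Set (Fin N → ℝ)) \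
        ⋃ W ∈ {W | W ∈ 𝒯 ∧ cov V W}, convexHull ℝ (W : Set (Fin N → ℝ)))) =
      ⋃ V ∈ 𝒯, convexHull ℝ (V : Set (Fin N → ℝ)) :=
  halfopen_decomposition_general N 𝒯 hindep hinter le hrefl hantisymm htrans cov hcov hCmax
end

section
/- Let v = (f,g,s) and v' = (f',g',s') be clique vectors for H. Then φ(v') is obtained from φ(v) by a single counterclockwise rotation if and only if exactly one of the following holds: (1) g' = g, s' = s, and f' differs from f at exactly one i₀ ∈ S, with g(f(i₀)) ≠ i₀ and f'(i₀) = max{j ∈ N(i₀) : j < f(i₀)}; (2) f' = f, s' = s, and g' differs from g at exactly one j₀ ∈ T, with f(g(j₀)) ≠ j₀ and g'(j₀) = min{i ∈ N(j₀) : i > g(j₀)}; (3) f' = f, g' = g, and s' differs from s at exactly one edge (i₀,j₀) ∈ E, with s(i₀,j₀) = − and s'(i₀,j₀) = +; (4) s' differs from s at exactly one edge (i₀,j₀) ∈ E, with s(i₀,j₀) = + and s'(i₀,j₀) = −, and either g' = g and f' differs from f only at i₀ with f'(i₀) = max{j ∈ N(i₀) : j < j₀}, or f' = f and g' differs from g only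 at j₀ with g'(j₀) = min{i ∈ N(j₀) : i > i₀}. -/
/-!
Whether a route `(a, (i, j), c)` lies in `φ(v)` depends only on the edge `(i, j)` and on its
local state `(compare (f i) j, compare (g j) i, s (i, j))`, through a fixed table of ten
patterns. A rotation removes one route and adds one, so the local states of `v` and `v'` agree
off the (at most two) edges of the exchanged routes, and a finite check of the table says how
they may differ on those edges. Since `f i` is the only neighbour of `i` with which `f`
compares as `eq`, agreement along the rest of row `i` pins `f' i` down (and dually for `g`),
which turns the local constraints into the four global cases.
-/

open Finset Filter Pointwise

/-- `r` is clockwise from `r'` with respect to the canonical bipartite framing. -/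
def Clockwise (r r' : Route) : Prop :=
  (r.2.1 = r'.2.1 ∧ r.1 = 1 ∧ r.2.2 = 2 ∧ r'.1 = 2 ∧ r'.2.2 = 1) ∨
  (r.2.1.1 = r'.2.1.1 ∧ r'.2.1.2 < r.2.1.2 ∧ r.1 = 1 ∧ r'.1 = 2) ∨
  (r.2.1.2 = r'.2.1.2 ∧ r.2.1.1 < r'.2.1.1 ∧ r.2.2 = 2 ∧ r'.2.2 = 1)

/-- `C'` is obtained from `C` by a single counterclockwise rotation. -/
def CCWStep (C C' : Set Route) : Prop :=
  ∃ r ∈ C, ∃ r' ∈ C', Clockwise r r' ∧ C \ {r} = C' \ {r'}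

/-- `jval = max { j ∈ N(i) : j < jbound }`. -/
def IsMaxBelow (E : Finset (ℕ × ℕ)) (i jbound jval : ℕ) : Prop :=
  jval ∈ Nbr E i ∧ jval < jbound ∧ ∀ j ∈ Nbr E i, j < jbound → j ≤ jval

/-- `ival = min { i ∈ N(j) : i > ibound }`. -/
def IsMinAbove (E : Finset (ℕ × ℕ)) (j ibound ival : ℕ) : Prop :=
  ival ∈ Nbr' E j ∧ ibound < ival ∧ ∀ i ∈ Nbr' E j, ibound < i → ival ≤ i

variable {n m : ℕ} {E : Finset (ℕ × ℕ)}

lemma mem_Nbr_iff {i j : ℕ} : j ∈ Nbr E i ↔ (i, j) ∈ E := by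
  simp [Nbr]

lemma mem_Nbr'_iff {i j : ℕ} : i ∈ Nbr' E j ↔ (i, j) ∈ E := by
  simp [Nbr']

/-- The pairs `(a, c)` of the routes `(a, (i, j), c)` of `φ(v)`, as a function of
`(compare (f i) j, compare (g j) i, s (i, j))`. -/
def routePattern : Ordering × Ordering × Bool → Finset (ℕ × ℕ)
  | (.lt, .lt, _) => {(2, 2)}
  | (.lt, .eq, _) => {(2, 1), (2, 2)}
  | (.lt, .gt, _) => {(2, 1)}
  | (.gt, .lt, _) => {(1, 2)}
  | (.gt, .eq, _) => {(1, 1), (1, 2)}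
  | (.gt, .gt, _) => {(1, 1)}
  | (.eq, .lt, _) => {(1, 2), (2, 2)}
  | (.eq, .gt, _) => {(1, 1), (2, 1)}
  | (.eq, .eq, false) => {(1, 1), (1, 2), (2, 2)}
  | (.eq, .eq, true) => {(1, 1), (2, 1), (2, 2)}

def SignCompatible (t : Ordering × Ordering × Bool) : Prop :=
  t.2.2 = true → t.1 = .eq ∧ t.2.1 = .eq

instance : DecidablePred SignCompatible := fun _ => inferInstanceAs (Decidable (_ → _))

section routePattern

lemma routePattern_injOn : Set.InjOn routePattern {t | SignCompatible t} := by
  intro t ht t' ht'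
  revert t t'
  decide

lemma fst_ne_lt_of_mem_routePattern {t : Ordering × Ordering × Bool} {c : ℕ}
    (h : (1, c) ∈ routePattern t) : t.1 ≠ .lt := by
  obtain ⟨x, y, b⟩ := t
  cases x <;> cases y <;> cases b <;> simp_all [routePattern]

lemma fst_ne_gt_of_mem_routePattern {t : Ordering × Ordering × Bool} {c : ℕ}
    (h : (2, c) ∈ routePattern t) : t.1 ≠ .gt := by
  obtain ⟨x, y, b⟩ := t
  cases x <;> cases y <;> cases b <;> simp_all [routePattern]

lemma snd_ne_gt_of_mem_routePattern {t : Ordering × Ordering × Bool} {a : ℕ}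
    (h : (a, 2) ∈ routePattern t) : t.2.1 ≠ .gt := by
  obtain ⟨x, y, b⟩ := t
  cases x <;> cases y <;> cases b <;> simp_all [routePattern]

lemma snd_ne_lt_of_mem_routePattern {t : Ordering × Ordering × Bool} {a : ℕ}
    (h : (a, 1) ∈ routePattern t) : t.2.1 ≠ .lt := by
  obtain ⟨x, y, b⟩ := t
  cases x <;> cases y <;> cases b <;> simp_all [routePattern]

variable (t t' : Ordering × Ordering × Bool)

lemma exists_erase_routePattern_fst_one_iff (h : t.1 = .eq) (h' : t'.1 = .lt) :
    (∃ p ∈ routePattern t, p.1 = 1 ∧ (routePattern t).erase p = routePattern t') ↔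
      t'.2.1 = t.2.1 ∧ (t.2.1 = .eq → t.2.2 = true) := by
  revert t t'
  decide

lemma exists_erase_routePattern_fst_two_iff (ht' : SignCompatible t') (h : t.1 = .gt)
    (h' : t'.1 = .eq) :
    (∃ p ∈ routePattern t', p.1 = 2 ∧ (routePattern t').erase p = routePattern t) ↔
      t'.2.1 = t.2.1 ∧ t'.2.2 = false := by
  revert t t'
  decide

lemma exists_erase_routePattern_snd_two_iff (h : t.2.1 = .eq) (h' : t'.2.1 = .gt) :
    (∃ p ∈ routePattern t, p.2 = 2 ∧ (routePattern t).erase p = routePattern t') ↔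
      t'.1 = t.1 ∧ (t.1 = .eq → t.2.2 = true) := by
  revert t t'
  decide

lemma exists_erase_routePattern_snd_one_iff (ht' : SignCompatible t') (h : t.2.1 = .lt)
    (h' : t'.2.1 = .eq) :
    (∃ p ∈ routePattern t', p.2 = 1 ∧ (routePattern t').erase p = routePattern t) ↔
      t'.1 = t.1 ∧ t'.2.2 = false := by
  revert t t'
  decide

lemma routePattern_erase_one_two_eq_erase_two_one_iff (h₁ : t'.1 = t.1) (h₂ : t'.2.1 = t.2.1) :
    ((1, 2) ∈ routePattern t ∧ (2, 1) ∈ routePattern t' ∧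
        (routePattern t).erase (1, 2) = (routePattern t').erase (2, 1)) ↔
      t.1 = .eq ∧ t.2.1 = .eq ∧ t.2.2 = false ∧ t'.2.2 = true := by
  revert t t'
  decide

end routePattern

namespace CliqueVec

def edgeState (v : CliqueVec n m E) (e : ℕ × ℕ) : Ordering × Ordering × Bool :=
  (compare (v.f e.1) e.2, compare (v.g e.2) e.1, v.s e)

def fiber (v : CliqueVec n m E) (e : ℕ × ℕ) : Finset (ℕ × ℕ) :=
  routePattern (v.edgeState e)

lemma signCompatible_edgeState (v : CliqueVec n m E) (e : ℕ × ℕ) :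
    SignCompatible (v.edgeState e) := by
  intro h
  by_cases he : e ∈ E
  · obtain ⟨h₁, h₂⟩ := v.hs e he h
    simp [edgeState, h₁, h₂]
  · simp [edgeState, v.hs' e he] at h

lemma s_eq_false_of_f_ne (v : CliqueVec n m E) {e : ℕ × ℕ} (h : v.f e.1 ≠ e.2) :
    v.s e = false := by
  by_contra hs
  exact h (compare_eq_iff_eq.1 (v.signCompatible_edgeState e (by simpa [edgeState] using hs)).1)

lemma s_eq_false_of_g_ne (v : CliqueVec n m E) {e : ℕ × ℕ} (h : v.g e.2 ≠ e.1) :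
    v.s e = false := by
  by_contra hs
  exact h (compare_eq_iff_eq.1 (v.signCompatible_edgeState e (by simpa [edgeState] using hs)).2)

variable {v v' : CliqueVec n m E}

lemma mem_Icc_of_f_ne {i : ℕ} (h : v'.f i ≠ v.f i) : i ∈ Icc 1 n := by
  by_contra hi
  exact h (by rw [v.hf' i hi, v'.hf' i hi])

lemma mem_Icc_of_g_ne {j : ℕ} (h : v'.g j ≠ v.g j) : j ∈ Icc 1 m := by
  by_contra hj
  exact h (by rw [v.hg' j hj, v'.hg' j hj])

lemma f_mem_of_ne {i : ℕ} {J : Finset ℕ}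
    (h : ∀ j, (i, j) ∈ E → j ∉ J → compare (v'.f i) j = compare (v.f i) j)
    (hne : v'.f i ≠ v.f i) : v.f i ∈ J ∧ v'.f i ∈ J := by
  have hi := mem_Icc_of_f_ne hne
  constructor <;> by_contra hJ
  · exact hne (compare_eq_iff_eq.1 ((h _ (v.hf i hi) hJ).trans (by simp)))
  · exact hne (compare_eq_iff_eq.1 ((h _ (v'.hf i hi) hJ).symm.trans (by simp))).symm

lemma g_mem_of_ne {j : ℕ} {I : Finset ℕ}
    (h : ∀ i, (i, j) ∈ E → i ∉ I → compare (v'.g j) i = compare (v.g j) i)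
    (hne : v'.g j ≠ v.g j) : v.g j ∈ I ∧ v'.g j ∈ I := by
  have hj := mem_Icc_of_g_ne hne
  constructor <;> by_contra hI
  · exact hne (compare_eq_iff_eq.1 ((h _ (v.hg j hj) hI).trans (by simp)))
  · exact hne (compare_eq_iff_eq.1 ((h _ (v'.hg j hj) hI).symm.trans (by simp))).symm

lemma f_apply_eq_of_compare_eq {i : ℕ}
    (h : ∀ j, (i, j) ∈ E → compare (v'.f i) j = compare (v.f i) j) : v'.f i = v.f i := by
  by_contra hne
  simpa using (f_mem_of_ne (J := ∅) (fun j hj _ => h j hj) hne).1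

lemma g_apply_eq_of_compare_eq {j : ℕ}
    (h : ∀ i, (i, j) ∈ E → compare (v'.g j) i = compare (v.g j) i) : v'.g j = v.g j := by
  by_contra hne
  simpa using (g_mem_of_ne (I := ∅) (fun i hi _ => h i hi) hne).1

end CliqueVec

open CliqueVec

variable {v v' : CliqueVec n m E}

lemma mem_phi_iff_s9 {a c : ℕ} {e : ℕ × ℕ} : (a, e, c) ∈ phi v ↔ e ∈ E ∧ (a, c) ∈ v.fiber e := by
  obtain ⟨i, j⟩ := e
  simp only [phi, Set.mem_ofPred_eq, Prod.mk.injEq, and_assoc, exists_and_left, exists_eq_left',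
    fiber, edgeState]
  cases hcf : compare (v.f i) j <;> cases hcg : compare (v.g j) i <;>
    simp only [compare_lt_iff_lt, compare_eq_iff_eq, compare_gt_iff_gt] at hcf hcg <;>
    split_ifs <;> cases hs : v.s (i, j) <;> simp_all [routePattern] <;> omega

section sdiff

variable {a c a' c' : ℕ} {e e' : ℕ × ℕ}

lemma mem_phi_sdiff_singleton_iff {a₀ c₀ : ℕ} {x : ℕ × ℕ} :
    (a₀, x, c₀) ∈ phi v \ {(a, e, c)} ↔
      x ∈ E ∧ (a₀, c₀) ∈ (if x = e then (v.fiber x).erase (a, c) else v.fiber x) := by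
  simp only [Set.mem_sdiff, Set.mem_singleton_iff, mem_phi_iff_s9, Prod.mk.injEq]
  split_ifs with hx <;> simp [hx, Finset.mem_erase]
  tauto

lemma phi_sdiff_eq_iff :
    phi v \ {(a, e, c)} = phi v' \ {(a', e', c')} ↔
      ∀ x ∈ E, (if x = e then (v.fiber x).erase (a, c) else v.fiber x) =
        (if x = e' then (v'.fiber x).erase (a', c') else v'.fiber x) := by
  constructor
  · intro h x hx
    ext ⟨a₀, c₀⟩
    have := Set.ext_iff.1 h (a₀, x, c₀)
    simp only [mem_phi_sdiff_singleton_iff] at this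
    tauto
  · intro h
    ext ⟨a₀, x, c₀⟩
    simp only [mem_phi_sdiff_singleton_iff]
    by_cases hx : x ∈ E
    · rw [h x hx]
    · simp [hx]

lemma edgeState_eq_of_phi_sdiff_eq (h : phi v \ {(a, e, c)} = phi v' \ {(a', e', c')})
    {x : ℕ × ℕ} (hx : x ∈ E) (hxe : x ≠ e) (hxe' : x ≠ e') : v'.edgeState x = v.edgeState x :=
  (routePattern_injOn (v.signCompatible_edgeState x) (v'.signCompatible_edgeState x)
    (by simpa [hxe, hxe', fiber] using phi_sdiff_eq_iff.1 h x hx)).symm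

lemma phi_sdiff_eq_of_edgeState_eq (hee' : e ≠ e')
    (h : ∀ x ∈ E, x ≠ e → x ≠ e' → v'.edgeState x = v.edgeState x)
    (he : (v.fiber e).erase (a, c) = v'.fiber e) (he' : (v'.fiber e').erase (a', c') = v.fiber e') :
    phi v \ {(a, e, c)} = phi v' \ {(a', e', c')} := by
  refine phi_sdiff_eq_iff.2 fun x hx => ?_
  by_cases hxe : x = e
  · simp [hxe, hee', he]
  by_cases hxe' : x = e'
  · simp [hxe', Ne.symm hee', he']
  simp [hxe, hxe', fiber, h x hx hxe hxe']

end sdiff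

/-- Case (1), or the first alternative of case (4). -/
structure IsRowRotation (v v' : CliqueVec n m E) (i : ℕ) : Prop where
  g_eq : v'.g = v.g
  f_eq_of_ne : ∀ k, k ≠ i → v'.f k = v.f k
  isMaxBelow : IsMaxBelow E i (v.f i) (v'.f i)
  s_eq_of_ne : ∀ q, q ≠ (i, v.f i) → v'.s q = v.s q
  s_eq_true_of_g : v.g (v.f i) = i → v.s (i, v.f i) = true

/-- Case (2), or the second alternative of case (4). -/
structure IsColRotation (v v' : CliqueVec n m E) (j : ℕ) : Prop where
  f_eq : v'.f = v.f
  g_eq_of_ne : ∀ l, l ≠ j → v'.g l = v.g l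
  isMinAbove : IsMinAbove E j (v.g j) (v'.g j)
  s_eq_of_ne : ∀ q, q ≠ (v.g j, j) → v'.s q = v.s q
  s_eq_true_of_f : v.f (v.g j) = j → v.s (v.g j, j) = true

/-- Case (3). -/
def IsSignRaise (v v' : CliqueVec n m E) : Prop :=
  v'.f = v.f ∧ v'.g = v.g ∧
    ∃ p ∈ E, v.s p = false ∧ v'.s p = true ∧ ∀ q, q ≠ p → v'.s q = v.s q

section rotation

lemma ccwStep_of_isRowRotation {i : ℕ} (h : IsRowRotation v v' i) :
    CCWStep (phi v) (phi v') := by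
  obtain ⟨hg, hf, ⟨hjN, hjk, hmax⟩, hs, hsat⟩ := h
  have hkE : (i, v.f i) ∈ E := v.hf i (mem_Icc_of_f_ne hjk.ne)
  have hjE : (i, v'.f i) ∈ E := mem_Nbr_iff.1 hjN
  have hne : (i, v.f i) ≠ (i, v'.f i) := by simp [hjk.ne']
  have hother : ∀ x ∈ E, x ≠ (i, v.f i) → x ≠ (i, v'.f i) → v'.edgeState x = v.edgeState x := by
    rintro ⟨i', l⟩ hx hxk hxj
    have hfc : compare (v'.f i') l = compare (v.f i') l := by
      by_cases hii : i' = i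
      · subst hii
        have hl := hmax l (mem_Nbr_iff.2 hx)
        simp only [ne_eq, Prod.mk.injEq, true_and] at hxk hxj
        rcases lt_or_gt_of_ne hxk with hlk | hlk
        · rw [compare_gt_iff_gt.2 (lt_of_le_of_ne (hl hlk) hxj), compare_gt_iff_gt.2 hlk]
        · rw [compare_lt_iff_lt.2 (hjk.trans hlk), compare_lt_iff_lt.2 hlk]
      · rw [hf i' hii]
    simp [edgeState, hfc, hg, hs _ hxk]
  obtain ⟨⟨_, c⟩, hc, rfl, hck⟩ := (exists_erase_routePattern_fst_one_iff
    (v.edgeState (i, v.f i)) (v'.edgeState (i, v.f i)) (by simp [edgeState])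
    (compare_lt_iff_lt.2 hjk)).2
    ⟨by simp [edgeState, hg], fun hgk => hsat (by simpa [edgeState] using hgk)⟩
  obtain ⟨⟨_, c'⟩, hc', rfl, hcj⟩ := (exists_erase_routePattern_fst_two_iff
    (v.edgeState (i, v'.f i)) (v'.edgeState (i, v'.f i)) (v'.signCompatible_edgeState _)
    (compare_gt_iff_gt.2 hjk) (by simp [edgeState])).2
    ⟨by simp [edgeState, hg], by rw [edgeState, hs _ hne.symm, v.s_eq_false_of_f_ne hjk.ne']⟩
  exact ⟨(1, (i, v.f i), c), mem_phi_iff_s9.2 ⟨hkE, hc⟩, (2, (i, v'.f i), c'),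
    mem_phi_iff_s9.2 ⟨hjE, hc'⟩, Or.inr (Or.inl ⟨rfl, hjk, rfl, rfl⟩),
    phi_sdiff_eq_of_edgeState_eq hne hother hck hcj⟩

lemma ccwStep_of_isColRotation {j : ℕ} (h : IsColRotation v v' j) :
    CCWStep (phi v) (phi v') := by
  obtain ⟨hf, hg, ⟨hiN, hik, hmin⟩, hs, hsat⟩ := h
  have hkE : (v.g j, j) ∈ E := v.hg j (mem_Icc_of_g_ne hik.ne')
  have hiE : (v'.g j, j) ∈ E := mem_Nbr'_iff.1 hiN
  have hne : (v.g j, j) ≠ (v'.g j, j) := by simp [hik.ne]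
  have hother : ∀ x ∈ E, x ≠ (v.g j, j) → x ≠ (v'.g j, j) → v'.edgeState x = v.edgeState x := by
    rintro ⟨l, j'⟩ hx hxk hxi
    have hgc : compare (v'.g j') l = compare (v.g j') l := by
      by_cases hjj : j' = j
      · subst hjj
        have hl := hmin l (mem_Nbr'_iff.2 hx)
        simp only [ne_eq, Prod.mk.injEq, and_true] at hxk hxi
        rcases lt_or_gt_of_ne hxk with hlk | hlk
        · rw [compare_gt_iff_gt.2 (hlk.trans hik), compare_gt_iff_gt.2 hlk]
        · rw [compare_lt_iff_lt.2 (lt_of_le_of_ne (hl hlk) (Ne.symm hxi)),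
            compare_lt_iff_lt.2 hlk]
      · rw [hg j' hjj]
    simp [edgeState, hgc, hf, hs _ hxk]
  obtain ⟨⟨a, _⟩, ha, rfl, hak⟩ := (exists_erase_routePattern_snd_two_iff
    (v.edgeState (v.g j, j)) (v'.edgeState (v.g j, j)) (by simp [edgeState])
    (compare_gt_iff_gt.2 hik)).2
    ⟨by simp [edgeState, hf], fun hfk => hsat (by simpa [edgeState] using hfk)⟩
  obtain ⟨⟨a', _⟩, ha', rfl, hai⟩ := (exists_erase_routePattern_snd_one_iff
    (v.edgeState (v'.g j, j)) (v'.edgeState (v'.g j, j)) (v'.signCompatible_edgeState _)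
    (compare_lt_iff_lt.2 hik) (by simp [edgeState])).2
    ⟨by simp [edgeState, hf], by rw [edgeState, hs _ hne.symm, v.s_eq_false_of_g_ne hik.ne]⟩
  exact ⟨(a, (v.g j, j), 2), mem_phi_iff_s9.2 ⟨hkE, ha⟩, (a', (v'.g j, j), 1),
    mem_phi_iff_s9.2 ⟨hiE, ha'⟩, Or.inr (Or.inr ⟨rfl, hik, rfl, rfl⟩),
    phi_sdiff_eq_of_edgeState_eq hne hother hak hai⟩

lemma ccwStep_of_isSignRaise (h : IsSignRaise v v') : CCWStep (phi v) (phi v') := by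
  obtain ⟨hf, hg, p, hp, hs, hs', hsoff⟩ := h
  obtain ⟨hfp, hgp⟩ := v'.hs p hp hs'
  obtain ⟨h12, h21, herase⟩ := (routePattern_erase_one_two_eq_erase_two_one_iff
    (v.edgeState p) (v'.edgeState p) (by simp [edgeState, hf]) (by simp [edgeState, hg])).2
    ⟨by simp [edgeState, ← hf, hfp], by simp [edgeState, ← hg, hgp], hs, hs'⟩
  refine ⟨(1, p, 2), mem_phi_iff_s9.2 ⟨hp, h12⟩, (2, p, 1), mem_phi_iff_s9.2 ⟨hp, h21⟩,
    Or.inl ⟨rfl, rfl, rfl, rfl, rfl⟩, phi_sdiff_eq_iff.2 fun x hx => ?_⟩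
  by_cases hxp : x = p
  · simpa [hxp, fiber] using herase
  · simp [hxp, fiber, edgeState, hf, hg, hsoff x hxp]

variable {a c a' c' : ℕ}

lemma f_eq_of_phi_sdiff_eq {i j k : ℕ} (hr : (1, (i, k), c) ∈ phi v)
    (hr' : (2, (i, j), c') ∈ phi v') (hjk : j < k)
    (h : phi v \ {(1, (i, k), c)} = phi v' \ {(2, (i, j), c')}) : v.f i = k ∧ v'.f i = j := by
  rw [mem_phi_iff_s9] at hr hr'
  have hkf : k ≤ v.f i := compare_ge_iff_ge.1 (fst_ne_lt_of_mem_routePattern hr.2)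
  have hf'j : v'.f i ≤ j := compare_le_iff_le.1 (fst_ne_gt_of_mem_routePattern hr'.2)
  have := f_mem_of_ne (v := v) (v' := v') (i := i) (J := {k, j})
    (fun l hl hlJ => congrArg Prod.fst
      (edgeState_eq_of_phi_sdiff_eq h hl (by simp_all) (by simp_all)))
    (by omega)
  simp only [Finset.mem_insert, Finset.mem_singleton] at this
  omega

lemma g_eq_of_phi_sdiff_eq {i i' j : ℕ} (hr : (a, (i, j), 2) ∈ phi v)
    (hr' : (a', (i', j), 1) ∈ phi v') (hii' : i < i')
    (h : phi v \ {(a, (i, j), 2)} = phi v' \ {(a', (i', j), 1)}) : v.g j = i ∧ v'.g j = i' := by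
  rw [mem_phi_iff_s9] at hr hr'
  have hgi : v.g j ≤ i := compare_le_iff_le.1 (snd_ne_gt_of_mem_routePattern hr.2)
  have hg'i' : i' ≤ v'.g j := compare_ge_iff_ge.1 (snd_ne_lt_of_mem_routePattern hr'.2)
  have := g_mem_of_ne (v := v) (v' := v') (j := j) (I := {i, i'})
    (fun l hl hlI => congrArg (·.2.1)
      (edgeState_eq_of_phi_sdiff_eq h hl (by simp_all) (by simp_all)))
    (by omega)
  simp only [Finset.mem_insert, Finset.mem_singleton] at this
  omega

lemma isRowRotation_of_phi_sdiff_eq {i j k : ℕ} (hr : (1, (i, k), c) ∈ phi v)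
    (hr' : (2, (i, j), c') ∈ phi v') (hjk : j < k)
    (h : phi v \ {(1, (i, k), c)} = phi v' \ {(2, (i, j), c')}) : IsRowRotation v v' i := by
  obtain ⟨rfl, rfl⟩ := f_eq_of_phi_sdiff_eq hr hr' hjk h
  rw [mem_phi_iff_s9] at hr hr'
  have hne : (i, v.f i) ≠ (i, v'.f i) := by simp [hjk.ne']
  have hother := fun x hx => edgeState_eq_of_phi_sdiff_eq h (x := x) hx
  obtain ⟨hgk, hsk⟩ := (exists_erase_routePattern_fst_one_iff _ _ (by simp [edgeState])
    (compare_lt_iff_lt.2 hjk)).1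
    ⟨(1, c), hr.2, rfl, by simpa [hne, fiber] using phi_sdiff_eq_iff.1 h _ hr.1⟩
  obtain ⟨hgj, hs'j⟩ := (exists_erase_routePattern_fst_two_iff _ _ (v'.signCompatible_edgeState _)
    (compare_gt_iff_gt.2 hjk) (by simp [edgeState])).1
    ⟨(2, c'), hr'.2, rfl, by simpa [hne.symm, fiber] using (phi_sdiff_eq_iff.1 h _ hr'.1).symm⟩
  refine ⟨funext fun l => g_apply_eq_of_compare_eq fun i' hl => ?_, fun i' hi' => ?_, ?_, ?_, ?_⟩
  · by_cases hlk : (i', l) = (i, v.f i)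
    · simp only [Prod.mk.injEq] at hlk
      obtain ⟨rfl, rfl⟩ := hlk
      exact hgk
    by_cases hlj : (i', l) = (i, v'.f i)
    · simp only [Prod.mk.injEq] at hlj
      obtain ⟨rfl, rfl⟩ := hlj
      exact hgj
    exact congrArg (·.2.1) (hother _ hl hlk hlj)
  · exact f_apply_eq_of_compare_eq fun l hl =>
      congrArg Prod.fst (hother (i', l) hl (by simp [hi']) (by simp [hi']))
  · refine ⟨mem_Nbr_iff.2 hr'.1, hjk, fun l hl hlk => ?_⟩
    by_contra! hjl
    have := congrArg Prod.fst
      (hother (i, l) (mem_Nbr_iff.1 hl) (by simp [hlk.ne]) (by simp [hjl.ne']))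
    simp only [edgeState, compare_lt_iff_lt.2 hjl, compare_gt_iff_gt.2 hlk] at this
    cases this
  · intro q hq
    by_cases hqE : q ∈ E
    · by_cases hqj : q = (i, v'.f i)
      · subst hqj
        exact hs'j.trans (v.s_eq_false_of_f_ne hjk.ne').symm
      · exact congrArg (·.2.2) (hother q hqE hq hqj)
    · rw [v.hs' q hqE, v'.hs' q hqE]
  · exact fun hg => hsk (compare_eq_iff_eq.2 hg)

lemma isColRotation_of_phi_sdiff_eq {i i' j : ℕ} (hr : (a, (i, j), 2) ∈ phi v)
    (hr' : (a', (i', j), 1) ∈ phi v') (hii' : i < i')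
    (h : phi v \ {(a, (i, j), 2)} = phi v' \ {(a', (i', j), 1)}) : IsColRotation v v' j := by
  obtain ⟨rfl, rfl⟩ := g_eq_of_phi_sdiff_eq hr hr' hii' h
  rw [mem_phi_iff_s9] at hr hr'
  have hne : (v.g j, j) ≠ (v'.g j, j) := by simp [hii'.ne]
  have hother := fun x hx => edgeState_eq_of_phi_sdiff_eq h (x := x) hx
  obtain ⟨hfi, hsi⟩ := (exists_erase_routePattern_snd_two_iff _ _ (by simp [edgeState])
    (compare_gt_iff_gt.2 hii')).1
    ⟨(a, 2), hr.2, rfl, by simpa [hne, fiber] using phi_sdiff_eq_iff.1 h _ hr.1⟩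
  obtain ⟨hfi', hs'i'⟩ := (exists_erase_routePattern_snd_one_iff _ _
    (v'.signCompatible_edgeState _) (compare_lt_iff_lt.2 hii') (by simp [edgeState])).1
    ⟨(a', 1), hr'.2, rfl, by simpa [hne.symm, fiber] using (phi_sdiff_eq_iff.1 h _ hr'.1).symm⟩
  refine ⟨funext fun l => f_apply_eq_of_compare_eq fun j' hl => ?_, fun j' hj' => ?_, ?_, ?_, ?_⟩
  · by_cases hli : (l, j') = (v.g j, j)
    · simp only [Prod.mk.injEq] at hli
      obtain ⟨rfl, rfl⟩ := hli
      exact hfi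
    by_cases hli' : (l, j') = (v'.g j, j)
    · simp only [Prod.mk.injEq] at hli'
      obtain ⟨rfl, rfl⟩ := hli'
      exact hfi'
    exact congrArg Prod.fst (hother _ hl hli hli')
  · exact g_apply_eq_of_compare_eq fun l hl =>
      congrArg (·.2.1) (hother (l, j') hl (by simp [hj']) (by simp [hj']))
  · refine ⟨mem_Nbr'_iff.2 hr'.1, hii', fun l hl hil => ?_⟩
    by_contra! hli'
    have := congrArg (·.2.1)
      (hother (l, j) (mem_Nbr'_iff.1 hl) (by simp [hil.ne']) (by simp [hli'.ne]))
    simp only [edgeState, compare_gt_iff_gt.2 hli', compare_lt_iff_lt.2 hil] at this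
    cases this
  · intro q hq
    by_cases hqE : q ∈ E
    · by_cases hqi : q = (v'.g j, j)
      · subst hqi
        exact hs'i'.trans (v.s_eq_false_of_g_ne hii'.ne).symm
      · exact congrArg (·.2.2) (hother q hqE hq hqi)
    · rw [v.hs' q hqE, v'.hs' q hqE]
  · exact fun hf => hsi (compare_eq_iff_eq.2 hf)

lemma isSignRaise_of_phi_sdiff_eq {e : ℕ × ℕ} (hr : (1, e, 2) ∈ phi v)
    (hr' : (2, e, 1) ∈ phi v') (h : phi v \ {(1, e, 2)} = phi v' \ {(2, e, 1)}) :
    IsSignRaise v v' := by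
  obtain ⟨i, j⟩ := e
  rw [mem_phi_iff_s9] at hr hr'
  have hother := fun x hx hxe => edgeState_eq_of_phi_sdiff_eq h (x := x) hx hxe hxe
  have hf : v'.f = v.f := funext fun i' => by
    by_contra hne
    have := f_mem_of_ne (J := {j})
      (fun l hl hlJ => congrArg Prod.fst (hother (i', l) hl (by simp_all))) hne
    simp only [Finset.mem_singleton] at this
    exact hne (this.2.trans this.1.symm)
  have hg : v'.g = v.g := funext fun j' => by
    by_contra hne
    have := g_mem_of_ne (I := {i})
      (fun l hl hlI => congrArg (·.2.1) (hother (l, j') hl (by simp_all))) hne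
    simp only [Finset.mem_singleton] at this
    exact hne (this.2.trans this.1.symm)
  obtain ⟨-, -, hs, hs'⟩ := (routePattern_erase_one_two_eq_erase_two_one_iff _ _
    (by simp [edgeState, hf]) (by simp [edgeState, hg])).1
    ⟨hr.2, hr'.2, by simpa [fiber] using phi_sdiff_eq_iff.1 h _ hr.1⟩
  refine ⟨hf, hg, (i, j), hr.1, hs, hs', fun q hq => ?_⟩
  by_cases hqE : q ∈ E
  · exact congrArg (·.2.2) (hother q hqE hq)
  · rw [v.hs' q hqE, v'.hs' q hqE]

end rotation

lemma ccwStep_phi_iff :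
    CCWStep (phi v) (phi v') ↔
      (∃ i, IsRowRotation v v' i) ∨ (∃ j, IsColRotation v v' j) ∨ IsSignRaise v v' := by
  constructor
  · rintro ⟨⟨a, ⟨i, k⟩, c⟩, hr, ⟨a', ⟨i', j⟩, c'⟩, hr', hcw, h⟩
    simp only [Clockwise, Prod.mk.injEq] at hcw
    rcases hcw with ⟨⟨rfl, rfl⟩, rfl, rfl, rfl, rfl⟩ | ⟨rfl, hjk, rfl, rfl⟩ | ⟨rfl, hii', rfl, rfl⟩
    · exact Or.inr (Or.inr (isSignRaise_of_phi_sdiff_eq hr hr' h))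
    · exact Or.inl ⟨i, isRowRotation_of_phi_sdiff_eq hr hr' hjk h⟩
    · exact Or.inr (Or.inl ⟨k, isColRotation_of_phi_sdiff_eq hr hr' hii' h⟩)
  · rintro (⟨i, h⟩ | ⟨j, h⟩ | h)
    · exact ccwStep_of_isRowRotation h
    · exact ccwStep_of_isColRotation h
    · exact ccwStep_of_isSignRaise h
lemma exists_isRowRotation_iff :
    (∃ i, IsRowRotation v v' i) ↔
      (∃ i₀, 1 ≤ i₀ ∧ i₀ ≤ n ∧ v'.g = v.g ∧ v'.s = v.s ∧
          v'.f i₀ ≠ v.f i₀ ∧ (∀ i, i ≠ i₀ → v'.f i = v.f i) ∧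
          v.g (v.f i₀) ≠ i₀ ∧ IsMaxBelow E i₀ (v.f i₀) (v'.f i₀)) ∨
        ∃ p ∈ E, v.s p = true ∧ v'.s p = false ∧ (∀ q, q ≠ p → v'.s q = v.s q) ∧
          v'.g = v.g ∧ (∀ i, i ≠ p.1 → v'.f i = v.f i) ∧ IsMaxBelow E p.1 p.2 (v'.f p.1) := by
  constructor
  · rintro ⟨i, h⟩
    have hne : v'.f i ≠ v.f i := h.isMaxBelow.2.1.ne
    have hi := mem_Icc_of_f_ne hne
    have hs' : v'.s (i, v.f i) = false := v'.s_eq_false_of_f_ne hne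
    by_cases hgi : v.g (v.f i) = i
    · exact Or.inr ⟨(i, v.f i), v.hf i hi, h.s_eq_true_of_g hgi, hs', h.s_eq_of_ne, h.g_eq,
        h.f_eq_of_ne, h.isMaxBelow⟩
    · refine Or.inl ⟨i, (mem_Icc.1 hi).1, (mem_Icc.1 hi).2, h.g_eq, funext fun q => ?_, hne,
        h.f_eq_of_ne, hgi, h.isMaxBelow⟩
      by_cases hq : q = (i, v.f i)
      · rw [hq, hs', v.s_eq_false_of_g_ne hgi]
      · exact h.s_eq_of_ne q hq
  · rintro (⟨i, -, -, hg, hs, -, hf, hgi, hmax⟩ | ⟨⟨i, k⟩, hp, hs, -, hsoff, hg, hf, hmax⟩)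
    · exact ⟨i, hg, hf, hmax, fun q _ => by rw [hs], fun h => absurd h hgi⟩
    · obtain ⟨hfi, -⟩ := v.hs _ hp hs
      dsimp only at hfi hf hmax
      subst hfi
      exact ⟨i, hg, hf, hmax, hsoff, fun _ => hs⟩

lemma exists_isColRotation_iff :
    (∃ j, IsColRotation v v' j) ↔
      (∃ j₀, 1 ≤ j₀ ∧ j₀ ≤ m ∧ v'.f = v.f ∧ v'.s = v.s ∧
          v'.g j₀ ≠ v.g j₀ ∧ (∀ j, j ≠ j₀ → v'.g j = v.g j) ∧
          v.f (v.g j₀) ≠ j₀ ∧ IsMinAbove E j₀ (v.g j₀) (v'.g j₀)) ∨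
        ∃ p ∈ E, v.s p = true ∧ v'.s p = false ∧ (∀ q, q ≠ p → v'.s q = v.s q) ∧
          v'.f = v.f ∧ (∀ j, j ≠ p.2 → v'.g j = v.g j) ∧ IsMinAbove E p.2 p.1 (v'.g p.2) := by
  constructor
  · rintro ⟨j, h⟩
    have hne : v'.g j ≠ v.g j := h.isMinAbove.2.1.ne'
    have hj := mem_Icc_of_g_ne hne
    have hs' : v'.s (v.g j, j) = false := v'.s_eq_false_of_g_ne hne
    by_cases hfj : v.f (v.g j) = j
    · exact Or.inr ⟨(v.g j, j), v.hg j hj, h.s_eq_true_of_f hfj, hs', h.s_eq_of_ne, h.f_eq,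
        h.g_eq_of_ne, h.isMinAbove⟩
    · refine Or.inl ⟨j, (mem_Icc.1 hj).1, (mem_Icc.1 hj).2, h.f_eq, funext fun q => ?_, hne,
        h.g_eq_of_ne, hfj, h.isMinAbove⟩
      by_cases hq : q = (v.g j, j)
      · rw [hq, hs', v.s_eq_false_of_f_ne hfj]
      · exact h.s_eq_of_ne q hq
  · rintro (⟨j, -, -, hf, hs, -, hg, hfj, hmin⟩ | ⟨⟨i, j⟩, hp, hs, -, hsoff, hf, hg, hmin⟩)
    · exact ⟨j, hf, hg, hmin, fun q _ => by rw [hs], fun h => absurd h hfj⟩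
    · obtain ⟨-, hgj⟩ := v.hs _ hp hs
      dsimp only at hgj hg hmin
      subst hgj
      exact ⟨j, hf, hg, hmin, hsoff, fun _ => hs⟩

theorem cover_characterization_general (n m : ℕ) (E : Finset (ℕ × ℕ))
    (v v' : CliqueVec n m E) :
    CCWStep (phi v) (phi v') ↔
      ((∃ i₀, 1 ≤ i₀ ∧ i₀ ≤ n ∧ v'.g = v.g ∧ v'.s = v.s ∧
          v'.f i₀ ≠ v.f i₀ ∧ (∀ i, i ≠ i₀ → v'.f i = v.f i) ∧
          v.g (v.f i₀) ≠ i₀ ∧ IsMaxBelow E i₀ (v.f i₀) (v'.f i₀)) ∨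
       (∃ j₀, 1 ≤ j₀ ∧ j₀ ≤ m ∧ v'.f = v.f ∧ v'.s = v.s ∧
          v'.g j₀ ≠ v.g j₀ ∧ (∀ j, j ≠ j₀ → v'.g j = v.g j) ∧
          v.f (v.g j₀) ≠ j₀ ∧ IsMinAbove E j₀ (v.g j₀) (v'.g j₀)) ∨
       (v'.f = v.f ∧ v'.g = v.g ∧
          ∃ p ∈ E, v.s p = false ∧ v'.s p = true ∧ ∀ q, q ≠ p → v'.s q = v.s q) ∨
       (∃ p ∈ E, v.s p = true ∧ v'.s p = false ∧ (∀ q, q ≠ p → v'.s q = v.s q) ∧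
          ((v'.g = v.g ∧ (∀ i, i ≠ p.1 → v'.f i = v.f i) ∧
              IsMaxBelow E p.1 p.2 (v'.f p.1)) ∨
           (v'.f = v.f ∧ (∀ j, j ≠ p.2 → v'.g j = v.g j) ∧
              IsMinAbove E p.2 p.1 (v'.g p.2))))) := by
  rw [ccwStep_phi_iff, exists_isRowRotation_iff, exists_isColRotation_iff]
  simp only [and_or_left, exists_or]
  constructor
  · rintro ((h₁ | h₄) | (h₂ | h₄) | h₃)
    exacts [Or.inl h₁, Or.inr (Or.inr (Or.inr (Or.inl h₄))), Or.inr (Or.inl h₂),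
      Or.inr (Or.inr (Or.inr (Or.inr h₄))), Or.inr (Or.inr (Or.inl h₃))]
  · rintro (h₁ | h₂ | h₃ | h₄ | h₄)
    exacts [Or.inl (Or.inl h₁), Or.inr (Or.inl (Or.inl h₂)), Or.inr (Or.inr h₃),
      Or.inl (Or.inr h₄), Or.inr (Or.inl (Or.inr h₄))]

/-- Characterization of the cover relation (single counterclockwise rotation)
in the framing lattice, in terms of clique vectors. -/
theorem cover_characterization (n m : ℕ) (hn : 1 ≤ n) (hm : 1 ≤ m) (E : Finset (ℕ × ℕ))
    (hE : ∀ p ∈ E, 1 ≤ p.1 ∧ p.1 ≤ n ∧ 1 ≤ p.2 ∧ p.2 ≤ m)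
    (hdegS : ∀ i ∈ Finset.Icc 1 n, 2 ≤ (Nbr E i).card)
    (hdegT : ∀ j ∈ Finset.Icc 1 m, 2 ≤ (Nbr' E j).card)
    (v v' : CliqueVec n m E) :
    CCWStep (phi v) (phi v') ↔
      ((∃ i₀, 1 ≤ i₀ ∧ i₀ ≤ n ∧ v'.g = v.g ∧ v'.s = v.s ∧
          v'.f i₀ ≠ v.f i₀ ∧ (∀ i, i ≠ i₀ → v'.f i = v.f i) ∧
          v.g (v.f i₀) ≠ i₀ ∧ IsMaxBelow E i₀ (v.f i₀) (v'.f i₀)) ∨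
       (∃ j₀, 1 ≤ j₀ ∧ j₀ ≤ m ∧ v'.f = v.f ∧ v'.s = v.s ∧
          v'.g j₀ ≠ v.g j₀ ∧ (∀ j, j ≠ j₀ → v'.g j = v.g j) ∧
          v.f (v.g j₀) ≠ j₀ ∧ IsMinAbove E j₀ (v.g j₀) (v'.g j₀)) ∨
       (v'.f = v.f ∧ v'.g = v.g ∧
          ∃ p ∈ E, v.s p = false ∧ v'.s p = true ∧ ∀ q, q ≠ p → v'.s q = v.s q) ∨
       (∃ p ∈ E, v.s p = true ∧ v'.s p = false ∧ (∀ q, q ≠ p → v'.s q = v.s q) ∧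
          ((v'.g = v.g ∧ (∀ i, i ≠ p.1 → v'.f i = v.f i) ∧
              IsMaxBelow E p.1 p.2 (v'.f p.1)) ∨
           (v'.f = v.f ∧ (∀ j, j ≠ p.2 → v'.g j = v.g j) ∧
              IsMinAbove E p.2 p.1 (v'.g p.2))))) :=
  cover_characterization_general n m E v v'
end
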